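/- arXiv:2602.07282 — 10 statements merged into one kernel-verified Lean document; each statement's English description precedes it below -/
import Mathlib

section
/- If $G$ is a cograph on $n$ vertices and $\lambda \neq 0$ is a real number, then there exists a real symmetric $n \times n$ matrix $M$ whose off-diagonal entry $m_{ij}$ is nonzero if and only if $\{i,j\}$ is an edge of $G$, such that every eigenvalue of $M$ lies in the set $\{-\lambda, 0, \lambda, 2\lambda\}$ and every diagonal entry of $M$ lies in $\{0, \lambda\}$. -/
/-- A cograph is a graph with no induced subgraph isomorphic to the path `P₄`. -/
def IsCograph {V : Type*} (G : SimpleGraph V) : Prop :=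
  IsEmpty (SimpleGraph.pathGraph 4 ↪g G)

/-!
A cograph on at least two vertices splits into two parts with either no edges or all edges
between them: otherwise the graph and its complement are both connected, and deleting a vertex
and inducting produces an induced `P₄`.

Along this splitting we build, for `μ ∈ {0, l}`, a matrix as in the theorem together with a
nowhere-vanishing unit `μ`-eigenvector `u`. Given two of them, `M₁, M₂`, for the same `μ`, the
block matrix `[[M₁, c u₁u₂ᵀ], [c u₂u₁ᵀ, M₂]]` has the eigenvectors `(u₁, ±u₂)/√2` for `μ ± c`,
and every other eigenvalue is one of `M₁` or `M₂`: an eigenvector `(v₁, v₂)` is either orthogonal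
to `u₁` and `u₂` blockwise, or pairing it with `u₁, u₂` forces its eigenvalue to be `μ ± c`.
Taking `c = 0` realizes the split without edges, for either `μ`. Taking `c = l` realizes the
complete split: gluing at `μ = l` along `(u₁, -u₂)` gives `μ = 0`, gluing at `μ = 0` along
`(u₁, u₂)` gives `μ = l`, and the new eigenvalues `μ ± l` stay in `{-l, 0, l, 2l}`.
-/

open Matrix SimpleGraph

namespace SimpleGraph

variable {V W : Type*} {G : SimpleGraph V} {a b c d : V}

def IsInducedP4 (G : SimpleGraph V) (a b c d : V) : Prop :=
  G.Adj a b ∧ G.Adj b c ∧ G.Adj c d ∧ ¬G.Adj a c ∧ ¬G.Adj a d ∧ ¬G.Adj b d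

theorem IsInducedP4.map {H : SimpleGraph W} (f : G ↪g H) (h : G.IsInducedP4 a b c d) :
    H.IsInducedP4 (f a) (f b) (f c) (f d) := by
  simpa only [IsInducedP4, f.map_adj_iff] using h

theorem IsInducedP4.of_compl (h : Gᶜ.IsInducedP4 a b c d) : G.IsInducedP4 b d a c := by
  obtain ⟨hab, hbc, hcd, hac, had, hbd⟩ := h
  have adj_of_not_adj_compl {x y : V} (h : ¬Gᶜ.Adj x y) (hxy : x ≠ y) : G.Adj x y := by
    by_contra h'
    exact h ⟨hxy, h'⟩
  refine ⟨adj_of_not_adj_compl hbd ?_, (adj_of_not_adj_compl had ?_).symm,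
    adj_of_not_adj_compl hac ?_, fun h => hab.2 h.symm, hbc.2, fun h => hcd.2 h.symm⟩
  · rintro rfl; exact had hab
  · rintro rfl; exact hac hcd.symm
  · rintro rfl; exact had hcd

theorem IsInducedP4.nonempty_embedding (h : G.IsInducedP4 a b c d) :
    Nonempty (pathGraph 4 ↪g G) := by
  obtain ⟨hab, hbc, hcd, hac, had, hbd⟩ := h
  have : a ≠ c := by rintro rfl; exact had hcd
  have : a ≠ d := by rintro rfl; exact hac hcd.symm
  have : b ≠ d := by rintro rfl; exact had hab
  refine ⟨⟨⟨![a, b, c, d], ?_⟩, ?_⟩⟩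
  · intro i j hij
    fin_cases i <;> fin_cases j <;> simp_all [hab.ne, hbc.ne, hcd.ne, eq_comm]
  · intro i j
    change G.Adj (![a, b, c, d] i) (![a, b, c, d] j) ↔ _
    fin_cases i <;> fin_cases j <;> simp_all [pathGraph_adj, adj_comm]

theorem Walk.exists_adj_reachable_induce_compl_singleton {x v : V} (p : G.Walk x v)
    (hx : x ≠ v) : ∃ (y : V) (hy : y ≠ v), G.Adj y v ∧
      (G.induce {v}ᶜ).Reachable ⟨x, hx⟩ ⟨y, hy⟩ := by
  induction p with
  | nil => exact absurd rfl hx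
  | @cons x x' v h p ih =>
    by_cases hx' : x' = v
    · subst hx'
      exact ⟨x, hx, h, .rfl⟩
    · obtain ⟨y, hy, hyv, hxy⟩ := ih hx'
      exact ⟨y, hy, hyv, (show (G.induce {v}ᶜ).Adj ⟨x, hx⟩ ⟨x', hx'⟩ from h).reachable.trans hxy⟩

-- The induced path is `v - u - a - w`. Here `a` is a `G`-non-neighbour of `v` outside the
-- component `C` of `Gᶜ - v` containing a `G`-neighbour of `v`, so `G` joins `a` to all of `C`;
-- and `u w` is a `Gᶜ`-edge inside `C` across which `G`-adjacency to `v` switches off.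
theorem exists_isInducedP4_of_not_preconnected_compl_induce (hG : G.Connected)
    (hGc : Gᶜ.Connected) {v : V} (h : ¬(Gᶜ.induce {v}ᶜ).Preconnected) :
    ∃ a b c d, G.IsInducedP4 a b c d := by
  classical
  set H := Gᶜ.induce {v}ᶜ
  have reachable_not_adj (x : ↥({v}ᶜ : Set V)) :
      ∃ y : ↥({v}ᶜ : Set V), ¬G.Adj v y ∧ H.Reachable x y := by
    obtain ⟨y, hy, hyv, hxy⟩ :=
      (hGc.preconnected x v).some.exists_adj_reachable_induce_compl_singleton x.2
    exact ⟨⟨y, hy⟩, fun h => hyv.2 h.symm, hxy⟩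
  obtain ⟨p, q, hpq⟩ : ∃ p q, ¬H.Reachable p q := by simpa [Preconnected] using h
  have : Nontrivial V := ⟨⟨v, p, fun h => p.2 h.symm⟩⟩
  obtain ⟨b, hvb⟩ := hG.preconnected.exists_adj_of_nontrivial v
  set b' : ↥({v}ᶜ : Set V) := ⟨b, hvb.ne.symm⟩
  obtain ⟨z, hbz⟩ : ∃ z, ¬H.Reachable b' z := by
    by_cases h : H.Reachable b' p
    · exact ⟨q, fun h' => hpq (h.symm.trans h')⟩
    · exact ⟨p, h⟩
  obtain ⟨a, hva, hza⟩ := reachable_not_adj z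
  have adj_of_reachable (s) (hs : H.Reachable b' s) : G.Adj s a := by
    by_contra hsa
    refine hbz (hs.trans ((?_ : H.Reachable s a).trans hza.symm))
    by_cases hs : s = a
    · rw [hs]
    · exact (show H.Adj s a from ⟨fun e => hs (Subtype.ext e), hsa⟩).reachable
  obtain ⟨y, hvy, hby⟩ := reachable_not_adj b'
  obtain ⟨d, hd, hu, hw⟩ := hby.some.exists_boundary_dart {x | G.Adj v x} hvb hvy
  have hbu : H.Reachable b' d.fst :=
    ⟨hby.some.takeUntil _ (hby.some.dart_fst_mem_support_of_mem_darts hd)⟩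
  exact ⟨v, d.fst, a, d.snd, hu, adj_of_reachable _ hbu,
    (adj_of_reachable _ (hbu.trans d.adj.reachable)).symm, hva, hw, d.adj.2⟩

theorem exists_set_forall_not_adj_of_not_preconnected (h : ¬G.Preconnected) :
    ∃ s : Set V, s.Nonempty ∧ sᶜ.Nonempty ∧ ∀ a ∈ s, ∀ b ∉ s, ¬G.Adj a b := by
  obtain ⟨x, y, hxy⟩ : ∃ x y, ¬G.Reachable x y := by simpa [Preconnected] using h
  exact ⟨{z | G.Reachable x z}, ⟨x, .rfl⟩, ⟨y, hxy⟩,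
    fun a ha b hb hab => hb (ha.trans hab.reachable)⟩

theorem compl_induce (s : Set V) : (G.induce s)ᶜ = Gᶜ.induce s := by
  ext a b
  simp [Subtype.ext_iff]

theorem exists_isInducedP4_of_connected_of_connected_compl [Finite V] [Nontrivial V]
    (hG : G.Connected) (hGc : Gᶜ.Connected) : ∃ a b c d, G.IsInducedP4 a b c d := by
  induction hn : Nat.card V using Nat.strong_induction_on generalizing V with
  | _ n ih =>
  obtain ⟨v⟩ : Nonempty V := inferInstance
  obtain ⟨y, hvy⟩ := hG.preconnected.exists_adj_of_nontrivial v
  obtain ⟨z, hvz⟩ := hGc.preconnected.exists_adj_of_nontrivial v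
  have : Nontrivial ↥({v}ᶜ : Set V) :=
    ⟨⟨y, hvy.ne.symm⟩, ⟨z, hvz.ne.symm⟩, fun h => hvz.2 (by cases h; exact hvy)⟩
  by_cases hpre : (G.induce {v}ᶜ).Preconnected
  · by_cases hpre' : (Gᶜ.induce {v}ᶜ).Preconnected
    · obtain ⟨a, b, c, d, h⟩ := ih _ (hn ▸ Finite.card_subtype_lt (x := v) (by simp)) ⟨hpre⟩
        (by rw [compl_induce]; exact ⟨hpre'⟩) rfl
      exact ⟨_, _, _, _, h.map (Embedding.induce _)⟩
    · exact exists_isInducedP4_of_not_preconnected_compl_induce hG hGc hpre'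
  · obtain ⟨a, b, c, d, h⟩ := exists_isInducedP4_of_not_preconnected_compl_induce hGc
      (by rwa [compl_compl]) (by rwa [compl_compl])
    exact ⟨_, _, _, _, h.of_compl⟩

end SimpleGraph

theorem eq_or_eq_neg_of_mul_eq_mul_of_mul_eq_mul {K : Type*} [Field K] {t c a b : K}
    (h₁ : t * a = c * b) (h₂ : t * b = c * a) (hab : a ≠ 0 ∨ b ≠ 0) : t = c ∨ t = -c := by
  refine mul_self_eq_mul_self_iff.mp (sub_eq_zero.mp ?_)
  rcases hab with ha | hb
  · have : (t * t - c * c) * a = 0 := by linear_combination t * h₁ + c * h₂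
    exact (mul_eq_zero.mp this).resolve_right ha
  · have : (t * t - c * c) * b = 0 := by linear_combination t * h₂ + c * h₁
    exact (mul_eq_zero.mp this).resolve_right hb

namespace Matrix

variable {K m n : Type*} [Field K]

def fromBlocksRankOne (M₁ : Matrix m m K) (M₂ : Matrix n n K) (u₁ : m → K) (u₂ : n → K) (c : K) :
    Matrix (m ⊕ n) (m ⊕ n) K :=
  fromBlocks M₁ (c • vecMulVec u₁ u₂) (c • vecMulVec u₂ u₁) M₂

theorem IsSymm.fromBlocksRankOne {M₁ : Matrix m m K} {M₂ : Matrix n n K} {u₁ : m → K}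
    {u₂ : n → K} {c : K} (h₁ : M₁.IsSymm) (h₂ : M₂.IsSymm) :
    (fromBlocksRankOne M₁ M₂ u₁ u₂ c).IsSymm :=
  h₁.fromBlocks (by rw [transpose_smul, transpose_vecMulVec]) h₂

variable [Fintype m] [Fintype n]

theorem mem_spectrum_iff_exists_mulVec_eq_smul [DecidableEq n] {M : Matrix n n K} {μ : K} :
    μ ∈ spectrum K M ↔ ∃ v ≠ 0, M *ᵥ v = μ • v := by
  rw [← spectrum_toLin', ← Module.End.hasEigenvalue_iff_mem_spectrum,
    Module.End.hasEigenvalue_iff, Submodule.ne_bot_iff]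
  simp [and_comm]

theorem IsSymm.dotProduct_mulVec_of_mulVec_eq_smul {M : Matrix n n K} (hM : M.IsSymm)
    {u : n → K} {μ : K} (hu : M *ᵥ u = μ • u) (v : n → K) : u ⬝ᵥ M *ᵥ v = μ * (u ⬝ᵥ v) := by
  rw [dotProduct_mulVec, ← mulVec_transpose, hM.eq, hu, smul_dotProduct, smul_eq_mul]

variable {M₁ : Matrix m m K} {M₂ : Matrix n n K} {u₁ : m → K} {u₂ : n → K} {c μ : K}

theorem fromBlocksRankOne_mulVec_sumElim (v₁ : m → K) (v₂ : n → K) :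
    fromBlocksRankOne M₁ M₂ u₁ u₂ c *ᵥ Sum.elim v₁ v₂ =
      Sum.elim (M₁ *ᵥ v₁ + (c * (u₂ ⬝ᵥ v₂)) • u₁) (M₂ *ᵥ v₂ + (c * (u₁ ⬝ᵥ v₁)) • u₂) := by
  simp [fromBlocksRankOne, fromBlocks_mulVec, smul_mulVec, vecMulVec_mulVec, mul_smul, add_comm]

theorem fromBlocksRankOne_mulVec_sumElim_eq_smul (hu₁ : M₁ *ᵥ u₁ = μ • u₁)
    (hu₂ : M₂ *ᵥ u₂ = μ • u₂) (hn₁ : u₁ ⬝ᵥ u₁ = 1) (hn₂ : u₂ ⬝ᵥ u₂ = 1) {ε : K}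
    (hε : ε * ε = 1) :
    fromBlocksRankOne M₁ M₂ u₁ u₂ c *ᵥ Sum.elim u₁ (ε • u₂) =
      (μ + ε * c) • Sum.elim u₁ (ε • u₂) := by
  rw [fromBlocksRankOne_mulVec_sumElim]
  ext (i | i)
  · simp [hu₁, hn₂]
    ring
  · simp [mulVec_smul, hu₂, hn₁]
    linear_combination (-(u₂ i * c)) * hε

theorem spectrum_fromBlocksRankOne_subset [DecidableEq m] [DecidableEq n] (h₁ : M₁.IsSymm)
    (h₂ : M₂.IsSymm) (hu₁ : M₁ *ᵥ u₁ = μ • u₁) (hu₂ : M₂ *ᵥ u₂ = μ • u₂) (hn₁ : u₁ ⬝ᵥ u₁ = 1)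
    (hn₂ : u₂ ⬝ᵥ u₂ = 1) :
    spectrum K (fromBlocksRankOne M₁ M₂ u₁ u₂ c) ⊆
      spectrum K M₁ ∪ spectrum K M₂ ∪ {μ + c, μ - c} := by
  intro ν hν
  obtain ⟨v, hv, hMv⟩ := mem_spectrum_iff_exists_mulVec_eq_smul.mp hν
  obtain ⟨v₁, v₂, rfl⟩ : ∃ v₁ v₂, v = Sum.elim v₁ v₂ := ⟨_, _, (Sum.elim_comp_inl_inr v).symm⟩
  rw [fromBlocksRankOne_mulVec_sumElim] at hMv
  have e₁ : M₁ *ᵥ v₁ + (c * (u₂ ⬝ᵥ v₂)) • u₁ = ν • v₁ :=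
    funext fun i => by simpa using congrFun hMv (.inl i)
  have e₂ : M₂ *ᵥ v₂ + (c * (u₁ ⬝ᵥ v₁)) • u₂ = ν • v₂ :=
    funext fun i => by simpa using congrFun hMv (.inr i)
  by_cases hv_orth : u₁ ⬝ᵥ v₁ = 0 ∧ u₂ ⬝ᵥ v₂ = 0
  · simp only [hv_orth, mul_zero, zero_smul, add_zero] at e₁ e₂
    by_cases hv₁ : v₁ = 0
    · have hv₂ : v₂ ≠ 0 := fun hv₂ => hv (by rw [hv₁, hv₂, Sum.elim_zero_zero])
      exact .inl (.inr (mem_spectrum_iff_exists_mulVec_eq_smul.mpr ⟨v₂, hv₂, e₂⟩))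
    · exact .inl (.inl (mem_spectrum_iff_exists_mulVec_eq_smul.mpr ⟨v₁, hv₁, e₁⟩))
  · have d₁ := congrArg (u₁ ⬝ᵥ ·) e₁
    have d₂ := congrArg (u₂ ⬝ᵥ ·) e₂
    simp only [dotProduct_add, dotProduct_smul, h₁.dotProduct_mulVec_of_mulVec_eq_smul hu₁,
      h₂.dotProduct_mulVec_of_mulVec_eq_smul hu₂, hn₁, hn₂, smul_eq_mul, mul_one] at d₁ d₂
    rcases eq_or_eq_neg_of_mul_eq_mul_of_mul_eq_mul (t := ν - μ) (c := c)
      (by linear_combination -d₁) (by linear_combination -d₂) (not_and_or.mp hv_orth) with h | h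
    · exact .inr (.inl (by linear_combination h))
    · exact .inr (.inr (by linear_combination h : ν = μ - c))

end Matrix

/-- The matrices of the theorem, together with a nowhere-vanishing unit `μ`-eigenvector: it is
along these eigenvectors that two realizations are glued (`ofBlocks`). -/
structure SpectralRealization (l μ : ℝ) {V : Type*} [Fintype V] [DecidableEq V]
    (G : SimpleGraph V) where
  M : Matrix V V ℝ
  u : V → ℝ
  isSymm : M.IsSymm
  ne_zero_iff_adj : ∀ i j, i ≠ j → (M i j ≠ 0 ↔ G.Adj i j)
  diag_mem : ∀ i, M i i ∈ ({0, l} : Set ℝ)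
  spectrum_subset : spectrum ℝ M ⊆ ({-l, 0, l, 2 * l} : Set ℝ)
  mulVec_u : M *ᵥ u = μ • u
  u_ne_zero : ∀ i, u i ≠ 0
  u_dotProduct_u : u ⬝ᵥ u = 1

namespace SpectralRealization

variable {l μ : ℝ} {V W : Type*} [Fintype V] [DecidableEq V] [Fintype W] [DecidableEq W]
  {G : SimpleGraph V} {H : SimpleGraph W}

def ofUnique [Unique V] (G : SimpleGraph V) (hμ : μ ∈ ({0, l} : Set ℝ)) :
    SpectralRealization l μ G where
  M := diagonal fun _ => μ
  u := fun _ => 1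
  isSymm := isSymm_diagonal _
  ne_zero_iff_adj i j hij := absurd (Subsingleton.elim i j) hij
  diag_mem _ := by simpa using hμ
  spectrum_subset := by
    rw [spectrum_diagonal, Set.range_const]
    rcases hμ with rfl | rfl <;> simp
  mulVec_u := by ext; simp [mulVec_diagonal]
  u_ne_zero _ := one_ne_zero
  u_dotProduct_u := by simp [dotProduct]

def map (e : G ≃g H) (R : SpectralRealization l μ G) : SpectralRealization l μ H where
  M := reindex e.toEquiv e.toEquiv R.M
  u := R.u ∘ e.toEquiv.symm
  isSymm := R.isSymm.reindex _
  ne_zero_iff_adj i j hij :=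
    (R.ne_zero_iff_adj _ _ (by simpa using hij)).trans e.symm.map_adj_iff
  diag_mem i := R.diag_mem _
  spectrum_subset := by
    rw [← coe_reindexAlgEquiv ℝ ℝ, AlgEquiv.spectrum_eq]
    exact R.spectrum_subset
  mulVec_u := by
    rw [reindex_apply, submatrix_mulVec_equiv, Equiv.symm_symm, Function.comp_assoc,
      Equiv.symm_comp_self, Function.comp_id, R.mulVec_u]
    rfl
  u_ne_zero i := R.u_ne_zero _
  u_dotProduct_u := by
    rw [dotProduct_comp_equiv_symm, Function.comp_assoc, Equiv.symm_comp_self, Function.comp_id,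
      R.u_dotProduct_u]

noncomputable def ofBlocks {K : SimpleGraph (V ⊕ W)} (R₁ : SpectralRealization l μ G)
    (R₂ : SpectralRealization l μ H) {c ε ν : ℝ} (hε : ε * ε = 1) (hν : μ + ε * c = ν)
    (hc : {μ + c, μ - c} ⊆ ({-l, 0, l, 2 * l} : Set ℝ))
    (hK₁ : ∀ a b, K.Adj (.inl a) (.inl b) ↔ G.Adj a b)
    (hK₂ : ∀ a b, K.Adj (.inr a) (.inr b) ↔ H.Adj a b)
    (hK₁₂ : ∀ a b, K.Adj (.inl a) (.inr b) ↔ c ≠ 0) : SpectralRealization l ν K where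
  M := fromBlocksRankOne R₁.M R₂.M R₁.u R₂.u c
  u := (√2)⁻¹ • Sum.elim R₁.u (ε • R₂.u)
  isSymm := R₁.isSymm.fromBlocksRankOne R₂.isSymm
  ne_zero_iff_adj := by
    rintro (a | a) (b | b) hab
    · simpa [fromBlocksRankOne, hK₁] using R₁.ne_zero_iff_adj a b (by simpa using hab)
    · simp [fromBlocksRankOne, vecMulVec_apply, hK₁₂, R₁.u_ne_zero, R₂.u_ne_zero]
    · simp [fromBlocksRankOne, vecMulVec_apply, K.adj_comm (.inr a), hK₁₂, R₁.u_ne_zero,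
        R₂.u_ne_zero]
    · simpa [fromBlocksRankOne, hK₂] using R₂.ne_zero_iff_adj a b (by simpa using hab)
  diag_mem := by
    rintro (a | a)
    · simpa [fromBlocksRankOne] using R₁.diag_mem a
    · simpa [fromBlocksRankOne] using R₂.diag_mem a
  spectrum_subset :=
    (spectrum_fromBlocksRankOne_subset R₁.isSymm R₂.isSymm R₁.mulVec_u R₂.mulVec_u
      R₁.u_dotProduct_u R₂.u_dotProduct_u).trans
      (Set.union_subset (Set.union_subset R₁.spectrum_subset R₂.spectrum_subset) hc)
  mulVec_u := by
    rw [mulVec_smul, fromBlocksRankOne_mulVec_sumElim_eq_smul R₁.mulVec_u R₂.mulVec_u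
      R₁.u_dotProduct_u R₂.u_dotProduct_u hε, smul_comm, hν]
  u_ne_zero := by
    have hε₀ : ε ≠ 0 := left_ne_zero_of_mul_eq_one hε
    rintro (a | a) <;> simp [R₁.u_ne_zero, R₂.u_ne_zero, hε₀]
  u_dotProduct_u := by
    have h2 : (√2)⁻¹ * (√2)⁻¹ = (2 : ℝ)⁻¹ := by rw [← mul_inv, Real.mul_self_sqrt zero_le_two]
    simp only [smul_dotProduct, dotProduct_smul, sumElim_dotProduct_sumElim, R₁.u_dotProduct_u,
      R₂.u_dotProduct_u, smul_eq_mul]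
    linear_combination (1 + ε * ε) * h2 + (2 : ℝ)⁻¹ * hε

noncomputable def ofSplit (s : Set V) [DecidablePred (· ∈ s)]
    (R₁ : SpectralRealization l μ (G.induce s)) (R₂ : SpectralRealization l μ (G.induce sᶜ))
    {c ε ν : ℝ} (hε : ε * ε = 1) (hν : μ + ε * c = ν)
    (hc : {μ + c, μ - c} ⊆ ({-l, 0, l, 2 * l} : Set ℝ))
    (hcross : ∀ a ∈ s, ∀ b ∉ s, G.Adj a b ↔ c ≠ 0) : SpectralRealization l ν G :=
  (R₁.ofBlocks R₂ hε hν hc (fun _ _ => .rfl) (fun _ _ => .rfl)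
    (fun a b => hcross a a.2 b b.2)).map (Iso.comap (Equiv.Set.sumCompl s) G)

end SpectralRealization

namespace IsCograph

variable {V : Type*} {G : SimpleGraph V}

theorem not_isInducedP4 (hG : IsCograph G) (a b c d : V) : ¬G.IsInducedP4 a b c d :=
  fun h => hG.false h.nonempty_embedding.some

theorem induce (hG : IsCograph G) (s : Set V) : IsCograph (G.induce s) :=
  ⟨fun f => hG.false ((Embedding.induce s).comp f)⟩

theorem exists_split [Finite V] [Nontrivial V] (hG : IsCograph G) :
    ∃ s : Set V, s.Nonempty ∧ sᶜ.Nonempty ∧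
      ((∀ a ∈ s, ∀ b ∉ s, ¬G.Adj a b) ∨ ∀ a ∈ s, ∀ b ∉ s, G.Adj a b) := by
  by_cases hpre : G.Preconnected
  · have hpre' : ¬Gᶜ.Preconnected := fun hpre' =>
      have ⟨_, _, _, _, h⟩ := exists_isInducedP4_of_connected_of_connected_compl ⟨hpre⟩ ⟨hpre'⟩
      hG.not_isInducedP4 _ _ _ _ h
    obtain ⟨s, hs, hsc, hcross⟩ := exists_set_forall_not_adj_of_not_preconnected hpre'
    refine ⟨s, hs, hsc, .inr fun a ha b hb => ?_⟩
    by_contra hab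
    exact hcross a ha b hb ⟨ne_of_mem_of_not_mem ha hb, hab⟩
  · obtain ⟨s, hs, hsc, hcross⟩ := exists_set_forall_not_adj_of_not_preconnected hpre
    exact ⟨s, hs, hsc, .inl hcross⟩

theorem nonempty_spectralRealization {l : ℝ} (hl : l ≠ 0) [Fintype V] [DecidableEq V]
    [Nonempty V] (hG : IsCograph G) {μ : ℝ} (hμ : μ ∈ ({0, l} : Set ℝ)) :
    Nonempty (SpectralRealization l μ G) := by
  induction hn : Fintype.card V using Nat.strong_induction_on generalizing V μ with
  | _ n ih =>
  rcases subsingleton_or_nontrivial V with _ | _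
  · have : Unique V := uniqueOfSubsingleton (Classical.arbitrary V)
    exact ⟨.ofUnique G hμ⟩
  classical
  obtain ⟨s, hs, hsc, hsplit⟩ := hG.exists_split
  have := hs.to_subtype
  have := hsc.to_subtype
  have ih₁ {μ} (hμ : μ ∈ ({0, l} : Set ℝ)) : Nonempty (SpectralRealization l μ (G.induce s)) :=
    ih _ (hn ▸ Fintype.card_subtype_lt (x := hsc.some) hsc.some_mem) (hG.induce s) hμ rfl
  have ih₂ {μ} (hμ : μ ∈ ({0, l} : Set ℝ)) : Nonempty (SpectralRealization l μ (G.induce sᶜ)) :=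
    ih _ (hn ▸ Fintype.card_subtype_lt (x := hs.some) (by simpa using hs.some_mem))
      (hG.induce sᶜ) hμ rfl
  rcases hsplit with hnone | hall
  · exact ⟨.ofSplit s (ih₁ hμ).some (ih₂ hμ).some (c := 0) (one_mul 1) (by ring)
      (by rcases hμ with rfl | rfl <;> simp)
      fun a ha b hb => iff_of_false (hnone a ha b hb) (by simp)⟩
  · obtain rfl | rfl : μ = 0 ∨ l = μ := hμ.imp_right Eq.symm
    · exact ⟨.ofSplit s (ih₁ (μ := l) (by simp)).some (ih₂ (μ := l) (by simp)).some (c := l)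
        (ε := -1) (by norm_num) (by ring) (by simp [Set.insert_subset_iff, two_mul])
        fun a ha b hb => iff_of_true (hall a ha b hb) hl⟩
    · exact ⟨.ofSplit s (ih₁ (μ := 0) (by simp)).some (ih₂ (μ := 0) (by simp)).some (c := l)
        (ε := 1) (by norm_num) (by ring) (by simp [Set.insert_subset_iff])
        fun a ha b hb => iff_of_true (hall a ha b hb) hl⟩

end IsCograph

theorem cograph_exists_matrix_four_eigenvalues (n : ℕ) (G : SimpleGraph (Fin n))
    (hG : IsCograph G) (l : ℝ) (hl : l ≠ 0) :
    ∃ M : Matrix (Fin n) (Fin n) ℝ, M.IsSymm ∧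
      (∀ i j, i ≠ j → (M i j ≠ 0 ↔ G.Adj i j)) ∧
      spectrum ℝ M ⊆ ({-l, 0, l, 2 * l} : Set ℝ) ∧
      ∀ i, M i i ∈ ({0, l} : Set ℝ) := by
  rcases isEmpty_or_nonempty (Fin n) with _ | _
  · exact ⟨0, isSymm_zero, fun i => isEmptyElim i, by simp [spectrum.of_subsingleton],
      fun i => isEmptyElim i⟩
  · obtain ⟨R⟩ := hG.nonempty_spectralRealization hl (μ := 0) (by simp)
    exact ⟨R.M, R.isSymm, R.ne_zero_iff_adj, R.spectrum_subset, R.diag_mem⟩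
end

section
/- For every cograph $G$, the minimum number of distinct eigenvalues over all matrices in $S(G)$ satisfies $q(G) \leq 4$. -/
/-- The set of numbers of distinct eigenvalues of matrices in `S(G)`. -/
def eigCounts (n : ℕ) (G : SimpleGraph (Fin n)) : Set ℕ :=
  {k : ℕ | ∃ M : Matrix (Fin n) (Fin n) ℝ, M.IsSymm ∧
    (∀ i j, i ≠ j → (M i j ≠ 0 ↔ G.Adj i j)) ∧ (spectrum ℝ M).ncard = k}

/-!
A cograph on at least two vertices splits its vertex set as `A ⊔ Aᶜ` with either no edge or
every edge between the parts: otherwise deleting a vertex that is neither isolated nor dominating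
and splitting the rest produces an induced `P₄`. By induction, every nonempty cograph and
`s ∈ {1, 2}` admit a matrix `M ∈ S(G)` annihilated by `X (X - 1) (X - 2) (X - 3)`, hence with at
most four eigenvalues, having a nowhere-zero unit eigenvector `w` for `s`. For a disjoint union take
the block diagonal matrix. For a join take the parts at `d = 3 - s` and fill the off-diagonal blocks
with `c w₁ w₂ᵀ` and `c w₂ w₁ᵀ`, `c = s - d`, whose entries are all nonzero. This perturbation is
`c (P₊ - P₋)` for the projections `P±` onto `(w₁, ± w₂)`, eigenvectors of the block diagonal matrix
for `d`; it moves these two eigenvalues to `d ± c ∈ {0, 1, 2, 3}` and fixes the rest of the spectrum.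
-/

open Polynomial Matrix SimpleGraph

section PolynomialCalculus

variable {K A : Type*} [CommRing K] [Ring A] [Algebra K A] {N E : A} {d : K}

theorem pow_mul_eq_smul_of_mul_eq_smul (h : N * E = d • E) (n : ℕ) : N ^ n * E = d ^ n • E := by
  induction n with
  | zero => simp
  | succ n ih => rw [pow_succ, mul_assoc, h, mul_smul_comm, ih, smul_smul, pow_succ']

theorem add_smul_pow_of_isIdempotentElem (hE : IsIdempotentElem E) (hNE : N * E = d • E)
    (hEN : E * N = d • E) (a : K) (n : ℕ) :
    (N + a • E) ^ n = N ^ n + ((d + a) ^ n - d ^ n) • E := by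
  induction n with
  | zero => simp
  | succ n ih =>
    rw [pow_succ, ih, pow_succ]
    simp only [add_mul, mul_add, smul_mul_assoc, mul_smul_comm, pow_mul_eq_smul_of_mul_eq_smul hNE,
      hEN, hE.eq, smul_smul]
    module

theorem aeval_add_smul_of_isIdempotentElem (hE : IsIdempotentElem E) (hNE : N * E = d • E)
    (hEN : E * N = d • E) (a : K) (p : K[X]) :
    aeval (N + a • E) p = aeval N p + (p.eval (d + a) - p.eval d) • E := by
  induction p using Polynomial.induction_on' with
  | add p q hp hq => simp only [map_add, hp, hq, eval_add]; module
  | monomial n c =>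
    simp only [aeval_monomial, eval_monomial, add_smul_pow_of_isIdempotentElem hE hNE hEN,
      Algebra.algebraMap_eq_smul_one, smul_mul_assoc, one_mul]
    module

end PolynomialCalculus

theorem spectrum_subset_of_aeval_eq_zero {K A : Type*} [Field K] [Ring A] [Algebra K A] {a : A}
    {p : K[X]} (h : aeval a p = 0) : spectrum K a ⊆ {x | p.eval x = 0} := by
  rcases subsingleton_or_nontrivial A with _ | _
  · simp [spectrum.of_subsingleton]
  · intro x hx
    simpa [h, spectrum.zero_eq] using spectrum.subset_polynomial_aeval a p ⟨x, hx, rfl⟩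

section LineProjection

variable {V : Type*} [Fintype V] {N : Matrix V V ℝ} {x y : V → ℝ} {d : ℝ}

noncomputable def lineProj (x : V → ℝ) : Matrix V V ℝ := (x ⬝ᵥ x)⁻¹ • vecMulVec x x

theorem lineProj_mul_lineProj (x y : V → ℝ) :
    lineProj x * lineProj y = ((x ⬝ᵥ x)⁻¹ * (y ⬝ᵥ y)⁻¹ * (x ⬝ᵥ y)) • vecMulVec x y := by
  simp only [lineProj, smul_mul_smul, vecMulVec_mul_vecMulVec, vecMulVec_smul, smul_smul]

theorem isIdempotentElem_lineProj (hx : x ⬝ᵥ x ≠ 0) : IsIdempotentElem (lineProj x) := by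
  rw [IsIdempotentElem, lineProj_mul_lineProj, lineProj, mul_assoc, inv_mul_cancel₀ hx, mul_one]

theorem lineProj_mul_lineProj_of_dotProduct_eq_zero (hxy : x ⬝ᵥ y = 0) :
    lineProj x * lineProj y = 0 := by
  rw [lineProj_mul_lineProj, hxy, mul_zero, zero_smul]

theorem mul_lineProj_of_mulVec_eq_smul (h : N *ᵥ x = d • x) :
    N * lineProj x = d • lineProj x := by
  rw [lineProj, mul_smul_comm, mul_vecMulVec, h, smul_vecMulVec, smul_comm]

theorem lineProj_mul_of_mulVec_eq_smul (hN : N.IsSymm) (h : N *ᵥ x = d • x) :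
    lineProj x * N = d • lineProj x := by
  rw [lineProj, smul_mul_assoc, vecMulVec_mul, ← mulVec_transpose, hN.eq, h, vecMulVec_smul,
    smul_comm]

theorem aeval_add_smul_lineProj_add_smul_lineProj [DecidableEq V] (hN : N.IsSymm)
    (hx : N *ᵥ x = d • x) (hy : N *ᵥ y = d • y) (hxx : x ⬝ᵥ x ≠ 0) (hyy : y ⬝ᵥ y ≠ 0)
    (hxy : x ⬝ᵥ y = 0) (a b : ℝ) (p : ℝ[X]) :
    aeval (N + a • lineProj x + b • lineProj y) p = aeval N p +
      (p.eval (d + a) - p.eval d) • lineProj x + (p.eval (d + b) - p.eval d) • lineProj y := by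
  have hNy : (N + a • lineProj x) * lineProj y = d • lineProj y := by
    rw [add_mul, mul_lineProj_of_mulVec_eq_smul hy, smul_mul_assoc,
      lineProj_mul_lineProj_of_dotProduct_eq_zero hxy, smul_zero, add_zero]
  have hyN : lineProj y * (N + a • lineProj x) = d • lineProj y := by
    rw [mul_add, lineProj_mul_of_mulVec_eq_smul hN hy, mul_smul_comm,
      lineProj_mul_lineProj_of_dotProduct_eq_zero (by rwa [dotProduct_comm]), smul_zero, add_zero]
  rw [aeval_add_smul_of_isIdempotentElem (isIdempotentElem_lineProj hyy) hNy hyN,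
    aeval_add_smul_of_isIdempotentElem (isIdempotentElem_lineProj hxx)
      (mul_lineProj_of_mulVec_eq_smul hx) (lineProj_mul_of_mulVec_eq_smul hN hx)]

end LineProjection

section BlockMatrix

variable {V W : Type*} [Fintype V] [Fintype W] {M₁ : Matrix V V ℝ} {M₂ : Matrix W W ℝ}
  {w₁ : V → ℝ} {w₂ : W → ℝ} {d : ℝ}

theorem aeval_fromBlocks_zero {R : Type*} [CommRing R] [DecidableEq V] [DecidableEq W]
    (A : Matrix V V R) (D : Matrix W W R) (p : R[X]) :
    aeval (fromBlocks A 0 0 D) p = fromBlocks (aeval A p) 0 0 (aeval D p) := by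
  induction p using Polynomial.induction_on' with
  | add p q hp hq => simp only [map_add, hp, hq, fromBlocks_add, add_zero]
  | monomial n c =>
    simp only [aeval_monomial, fromBlocks_diagonal_pow, Algebra.algebraMap_eq_smul_one,
      smul_mul_assoc, one_mul, fromBlocks_smul, smul_zero]

theorem fromBlocks_add_lineProj_sub_lineProj (M₁ : Matrix V V ℝ) (M₂ : Matrix W W ℝ)
    (hw₁ : w₁ ⬝ᵥ w₁ = 1) (hw₂ : w₂ ⬝ᵥ w₂ = 1) (c : ℝ) :
    fromBlocks M₁ 0 0 M₂ + c • lineProj (Sum.elim w₁ w₂) - c • lineProj (Sum.elim w₁ (-w₂)) =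
      fromBlocks M₁ (c • vecMulVec w₁ w₂) (c • vecMulVec w₂ w₁) M₂ := by
  have hw₂' : (-w₂) ⬝ᵥ (-w₂) = 1 := by rw [neg_dotProduct_neg, hw₂]
  ext (i | i) (j | j) <;>
    simp [lineProj, sumElim_dotProduct_sumElim, hw₁, hw₂, hw₂', vecMulVec_apply] <;> ring

theorem fromBlocks_smul_vecMulVec_mulVec (h₁ : M₁ *ᵥ w₁ = d • w₁) (h₂ : M₂ *ᵥ w₂ = d • w₂)
    (hw₁ : w₁ ⬝ᵥ w₁ = 1) (hw₂ : w₂ ⬝ᵥ w₂ = 1) (c : ℝ) :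
    fromBlocks M₁ (c • vecMulVec w₁ w₂) (c • vecMulVec w₂ w₁) M₂ *ᵥ Sum.elim w₁ w₂ =
      (d + c) • Sum.elim w₁ w₂ := by
  ext (i | i) <;>
    simp [fromBlocks_mulVec, smul_mulVec, vecMulVec_mulVec, h₁, h₂, hw₁, hw₂] <;> ring

theorem aeval_fromBlocks_smul_vecMulVec [DecidableEq V] [DecidableEq W] (hM₁ : M₁.IsSymm)
    (hM₂ : M₂.IsSymm) (h₁ : M₁ *ᵥ w₁ = d • w₁) (h₂ : M₂ *ᵥ w₂ = d • w₂) (hw₁ : w₁ ⬝ᵥ w₁ = 1)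
    (hw₂ : w₂ ⬝ᵥ w₂ = 1) (c : ℝ) (p : ℝ[X]) :
    aeval (fromBlocks M₁ (c • vecMulVec w₁ w₂) (c • vecMulVec w₂ w₁) M₂) p =
      fromBlocks (aeval M₁ p) 0 0 (aeval M₂ p) +
        (p.eval (d + c) - p.eval d) • lineProj (Sum.elim w₁ w₂) +
        (p.eval (d - c) - p.eval d) • lineProj (Sum.elim w₁ (-w₂)) := by
  have hN := hM₁.fromBlocks (B := 0) (C := 0) transpose_zero hM₂
  have hx : fromBlocks M₁ 0 0 M₂ *ᵥ Sum.elim w₁ w₂ = d • Sum.elim w₁ w₂ := by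
    ext (i | i) <;> simp [fromBlocks_mulVec, h₁, h₂]
  have hy : fromBlocks M₁ 0 0 M₂ *ᵥ Sum.elim w₁ (-w₂) = d • Sum.elim w₁ (-w₂) := by
    ext (i | i) <;> simp [fromBlocks_mulVec, mulVec_neg, h₁, h₂]
  have hxx : Sum.elim w₁ w₂ ⬝ᵥ Sum.elim w₁ w₂ ≠ 0 := by
    rw [sumElim_dotProduct_sumElim, hw₁, hw₂]; norm_num
  have hyy : Sum.elim w₁ (-w₂) ⬝ᵥ Sum.elim w₁ (-w₂) ≠ 0 := by
    rw [sumElim_dotProduct_sumElim, neg_dotProduct_neg, hw₁, hw₂]; norm_num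
  have hxy : Sum.elim w₁ w₂ ⬝ᵥ Sum.elim w₁ (-w₂) = 0 := by
    rw [sumElim_dotProduct_sumElim, dotProduct_neg, hw₁, hw₂, add_neg_cancel]
  rw [← fromBlocks_add_lineProj_sub_lineProj M₁ M₂ hw₁ hw₂, sub_eq_add_neg, ← neg_smul,
    aeval_add_smul_lineProj_add_smul_lineProj hN hx hy hxx hyy hxy, aeval_fromBlocks_zero,
    ← sub_eq_add_neg]

end BlockMatrix

noncomputable def quartic : ℝ[X] := X * (X - 1) * (X - 2) * (X - 3)

theorem eval_quartic_eq_zero_iff {x : ℝ} :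
    quartic.eval x = 0 ↔ x = 0 ∨ x = 1 ∨ x = 2 ∨ x = 3 := by
  simp only [quartic, eval_mul, eval_sub, eval_X, eval_one, eval_ofNat, mul_eq_zero, sub_eq_zero]
  tauto

theorem ncard_spectrum_le_four {V : Type*} [Fintype V] [DecidableEq V] {M : Matrix V V ℝ}
    (hM : aeval M quartic = 0) : (spectrum ℝ M).ncard ≤ 4 := by
  have hsub : spectrum ℝ M ⊆ ↑({0, 1, 2, 3} : Finset ℝ) := fun x hx => by
    simpa using eval_quartic_eq_zero_iff.mp (spectrum_subset_of_aeval_eq_zero hM hx)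
  calc (spectrum ℝ M).ncard ≤ (↑({0, 1, 2, 3} : Finset ℝ) : Set ℝ).ncard :=
        Set.ncard_le_ncard hsub (Finset.finite_toSet _)
    _ ≤ 4 := by rw [Set.ncard_coe_finset]; exact Finset.card_le_four

structure Realization {V : Type*} [Fintype V] [DecidableEq V] (G : SimpleGraph V) (s : ℝ) where
  mat : Matrix V V ℝ
  vec : V → ℝ
  isSymm : mat.IsSymm
  ne_zero_iff_adj : ∀ i j, i ≠ j → (mat i j ≠ 0 ↔ G.Adj i j)
  vec_ne_zero : ∀ i, vec i ≠ 0
  dotProduct_self : vec ⬝ᵥ vec = 1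
  mulVec_vec : mat *ᵥ vec = s • vec
  aeval_quartic : aeval mat quartic = 0

namespace Realization

variable {V W : Type*} [Fintype V] [DecidableEq V] [Fintype W] [DecidableEq W]

noncomputable def ofCardEqOne (G : SimpleGraph V) (hV : Fintype.card V = 1) {s : ℝ}
    (hs : quartic.eval s = 0) : Realization G s where
  mat := algebraMap ℝ _ s
  vec := fun _ => 1
  isSymm := by simp [algebraMap_eq_diagonal, isSymm_diagonal]
  ne_zero_iff_adj i j hij := absurd (Fintype.card_le_one_iff.mp hV.le i j) hij
  vec_ne_zero _ := one_ne_zero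
  dotProduct_self := by simp [dotProduct, hV]
  mulVec_vec := by ext; simp [algebraMap_eq_diagonal, mulVec_diagonal]
  aeval_quartic := by rw [aeval_algebraMap_apply, coe_aeval_eq_eval, hs, map_zero]

noncomputable def map {G : SimpleGraph V} {G' : SimpleGraph W} {s : ℝ} (e : G ≃g G')
    (R : Realization G s) : Realization G' s where
  mat := reindex e.toEquiv e.toEquiv R.mat
  vec := R.vec ∘ e.toEquiv.symm
  isSymm := R.isSymm.submatrix _
  ne_zero_iff_adj i j hij :=
    (R.ne_zero_iff_adj _ _ (e.symm.injective.ne hij)).trans e.symm.map_adj_iff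
  vec_ne_zero _ := R.vec_ne_zero _
  dotProduct_self := by
    rw [comp_equiv_symm_dotProduct, Function.comp_assoc, Equiv.symm_comp_self, Function.comp_id,
      R.dotProduct_self]
  mulVec_vec := by
    rw [reindex_apply, submatrix_mulVec_equiv, Equiv.symm_symm, Function.comp_assoc,
      Equiv.symm_comp_self, Function.comp_id, R.mulVec_vec]
    rfl
  aeval_quartic := by
    rw [← coe_reindexAlgEquiv ℝ ℝ, aeval_algHom_apply, R.aeval_quartic, map_zero]

noncomputable def glue {G : SimpleGraph (V ⊕ W)} {d c : ℝ}
    (R₁ : Realization (G.comap Sum.inl) d) (R₂ : Realization (G.comap Sum.inr) d)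
    (hcross : ∀ a b, G.Adj (.inl a) (.inr b) ↔ c ≠ 0) (hd : quartic.eval d = 0)
    (hplus : quartic.eval (d + c) = 0) (hminus : quartic.eval (d - c) = 0) :
    Realization G (d + c) where
  mat := fromBlocks R₁.mat (c • vecMulVec R₁.vec R₂.vec) (c • vecMulVec R₂.vec R₁.vec) R₂.mat
  vec := (√2)⁻¹ • Sum.elim R₁.vec R₂.vec
  isSymm := R₁.isSymm.fromBlocks (by rw [transpose_smul, transpose_vecMulVec]) R₂.isSymm
  ne_zero_iff_adj
    | .inl a, .inl b, h => R₁.ne_zero_iff_adj a b (fun hab => h (congrArg _ hab))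
    | .inl a, .inr b, _ => by simp [hcross, R₁.vec_ne_zero, R₂.vec_ne_zero, vecMulVec_apply]
    | .inr a, .inl b, _ => by
      simp [G.adj_comm, hcross, R₁.vec_ne_zero, R₂.vec_ne_zero, vecMulVec_apply]
    | .inr a, .inr b, h => R₂.ne_zero_iff_adj a b (fun hab => h (congrArg _ hab))
  vec_ne_zero
    | .inl a => by simp [R₁.vec_ne_zero]
    | .inr a => by simp [R₂.vec_ne_zero]
  dotProduct_self := by
    rw [smul_dotProduct, dotProduct_smul, sumElim_dotProduct_sumElim, R₁.dotProduct_self,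
      R₂.dotProduct_self, smul_eq_mul, smul_eq_mul, ← mul_assoc, ← mul_inv, Real.mul_self_sqrt]
    all_goals norm_num
  mulVec_vec := by
    rw [mulVec_smul, fromBlocks_smul_vecMulVec_mulVec R₁.mulVec_vec R₂.mulVec_vec
      R₁.dotProduct_self R₂.dotProduct_self, smul_comm]
  aeval_quartic := by
    rw [aeval_fromBlocks_smul_vecMulVec R₁.isSymm R₂.isSymm R₁.mulVec_vec R₂.mulVec_vec
      R₁.dotProduct_self R₂.dotProduct_self, R₁.aeval_quartic, R₂.aeval_quartic, hd, hplus,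
      hminus]
    simp

end Realization

def pathGraphFourIsoCompl : pathGraph 4 ≃g (pathGraph 4)ᶜ where
  toFun := ![1, 3, 0, 2]
  invFun := ![2, 0, 3, 1]
  left_inv := by decide
  right_inv := by decide
  map_rel_iff' {a b} := by
    rw [compl_adj, pathGraph_adj, pathGraph_adj]
    fin_cases a <;> fin_cases b <;> decide

namespace SimpleGraph

variable {V : Type*} (G : SimpleGraph V)

/-- `G` is the disjoint union (`P` false) or the join (`P` true) of its restrictions to `A` and
`Aᶜ`. -/
def IsHomogeneousCut (A : Set V) : Prop :=
  A.Nonempty ∧ Aᶜ.Nonempty ∧ ∃ P : Prop, ∀ a ∈ A, ∀ b ∉ A, (G.Adj a b ↔ P)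

variable {G}

theorem IsHomogeneousCut.of_compl {A : Set V} (h : Gᶜ.IsHomogeneousCut A) :
    G.IsHomogeneousCut A := by
  obtain ⟨hA, hAc, P, hP⟩ := h
  refine ⟨hA, hAc, ¬P, fun a ha b hb => ?_⟩
  have hab : a ≠ b := by rintro rfl; exact hb ha
  rw [← hP a ha b hb, compl_adj]
  tauto

theorem isHomogeneousCut_singleton [Nontrivial V] (v : V) (P : Prop)
    (h : ∀ u ≠ v, G.Adj v u ↔ P) : G.IsHomogeneousCut {v} := by
  obtain ⟨u, hu⟩ := exists_ne v
  exact ⟨Set.singleton_nonempty v, ⟨u, hu⟩, P, fun a ha b hb => by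
    rw [Set.mem_singleton_iff.mp ha]; exact h b hb⟩

end SimpleGraph

namespace IsCograph

variable {V W : Type*} {G : SimpleGraph V}

theorem comap (hG : IsCograph G) (f : W ↪ V) : IsCograph (G.comap f) :=
  ⟨fun e => hG.false ((Embedding.comap f G).comp e)⟩

theorem compl (hG : IsCograph G) : IsCograph Gᶜ :=
  ⟨fun e => hG.false <| compl_compl G ▸
    (Embedding.complEquiv e).comp pathGraphFourIsoCompl.toEmbedding⟩

theorem false_of_inducedPath (hG : IsCograph G) {a b c d : V} (hab : G.Adj a b)
    (hbc : G.Adj b c) (hcd : G.Adj c d) (hac : ¬G.Adj a c) (had : ¬G.Adj a d) (hbd : ¬G.Adj b d)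
    (hac' : a ≠ c) (had' : a ≠ d) (hbd' : b ≠ d) : False := by
  refine hG.false ⟨⟨![a, b, c, d], fun i j hij => ?_⟩, fun {i j} => ?_⟩
  · fin_cases i <;> fin_cases j <;>
      simp_all [hab.ne, hbc.ne, hcd.ne, hab.ne.symm, hbc.ne.symm, hcd.ne.symm, hac'.symm,
        had'.symm, hbd'.symm]
  · change G.Adj (![a, b, c, d] i) (![a, b, c, d] j) ↔ _
    fin_cases i <;> fin_cases j <;>
      simp [pathGraph_adj, hab, hbc, hcd, hab.symm, hbc.symm, hcd.symm, hac, had, hbd,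
        G.adj_comm c a, G.adj_comm d a, G.adj_comm d b]

theorem exists_isHomogeneousCut_of_nonadj_mem (hG : IsCograph G) {v : V}
    {A : Set {u // u ≠ v}} (hAc : Aᶜ.Nonempty) (hA : ∀ a ∈ A, ∀ b ∉ A, ¬G.Adj a b)
    {y : {u // u ≠ v}} (hyA : y ∈ A) (hvy : ¬G.Adj v y) : ∃ S, G.IsHomogeneousCut S := by
  by_cases hB : ∀ b ∉ A, ¬G.Adj v b
  · refine ⟨Subtype.val '' Aᶜ, hAc.image _, ⟨v, fun ⟨b, _, hb⟩ => b.2 hb⟩, False, ?_⟩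
    rintro _ ⟨a, ha, rfl⟩ b hb
    by_cases hbv : b = v
    · subst hbv; simpa [G.adj_comm] using hB a ha
    · simpa [G.adj_comm] using hA ⟨b, hbv⟩ (by by_contra h; exact hb ⟨_, h, rfl⟩) a ha
  push Not at hB
  obtain ⟨x₂, hx₂A, hvx₂⟩ := hB
  -- `T` is a cut unless an edge `x y'` from it to a neighbour of `v` in `A` closes the induced
  -- path `y' x v x₂`
  let T : Set {u // u ≠ v} := {a | a ∈ A ∧ ¬G.Adj v a}
  by_cases hpath : ∃ x ∈ A, ∃ y' ∈ T, G.Adj v x ∧ G.Adj x y'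
  · obtain ⟨x, hxA, y', ⟨hy'A, hvy'⟩, hvx, hxy'⟩ := hpath
    refine (hG.false_of_inducedPath hxy'.symm hvx.symm hvx₂ (fun h => hvy' h.symm)
      (hA y' hy'A x₂ hx₂A) (hA x hxA x₂ hx₂A) y'.2 (fun h => ?_) (fun h => ?_)).elim
    · exact hx₂A (Subtype.ext h ▸ hy'A)
    · exact hx₂A (Subtype.ext h ▸ hxA)
  push Not at hpath
  refine ⟨Subtype.val '' T, ⟨y, y, ⟨hyA, hvy⟩, rfl⟩, ⟨v, fun ⟨b, _, hb⟩ => b.2 hb⟩, False, ?_⟩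
  rintro _ ⟨a, ⟨haA, hva⟩, rfl⟩ b hb
  by_cases hbv : b = v
  · subst hbv; simpa [G.adj_comm] using hva
  by_cases hbA : ⟨b, hbv⟩ ∈ A
  · have hvb : G.Adj v b := by
      by_contra h; exact hb ⟨⟨b, hbv⟩, ⟨hbA, h⟩, rfl⟩
    simpa [G.adj_comm] using hpath ⟨b, hbv⟩ hbA a ⟨haA, hva⟩ hvb
  · simpa using hA a haA ⟨b, hbv⟩ hbA

theorem exists_isHomogeneousCut_of_erase (hG : IsCograph G) {v : V}
    {A : Set {u // u ≠ v}} (hA : A.Nonempty) (hAc : Aᶜ.Nonempty)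
    (hcut : ∀ a ∈ A, ∀ b ∉ A, ¬G.Adj a b) {y : {u // u ≠ v}} (hvy : ¬G.Adj v y) :
    ∃ S, G.IsHomogeneousCut S := by
  by_cases hyA : y ∈ A
  · exact hG.exists_isHomogeneousCut_of_nonadj_mem hAc hcut hyA hvy
  · exact hG.exists_isHomogeneousCut_of_nonadj_mem (A := Aᶜ) (by rwa [compl_compl])
      (fun a ha b hb h => hcut b (not_not.mp hb) a ha h.symm) hyA hvy

theorem exists_isHomogeneousCut [Finite V] [Nontrivial V] (hG : IsCograph G) :
    ∃ A, G.IsHomogeneousCut A := by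
  induction hn : Nat.card V using Nat.strong_induction_on generalizing V with
  | _ n ih =>
  obtain ⟨v⟩ : Nonempty V := inferInstance
  by_cases hall : ∀ u ≠ v, G.Adj v u
  · exact ⟨{v}, isHomogeneousCut_singleton v True (by simpa using hall)⟩
  by_cases hnone : ∀ u ≠ v, ¬G.Adj v u
  · exact ⟨{v}, isHomogeneousCut_singleton v False (by simpa using hnone)⟩
  push Not at hall hnone
  obtain ⟨y, hyv, hvy⟩ := hall
  obtain ⟨z, hzv, hvz⟩ := hnone
  have : Nontrivial {u // u ≠ v} :=
    ⟨⟨y, hyv⟩, ⟨z, hzv⟩, fun h => hvy (by rwa [Subtype.mk.inj h])⟩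
  obtain ⟨A, hA, hAc, P, hP⟩ := ih _ (hn ▸ Finite.card_subtype_lt (p := (· ≠ v)) (not_not.mpr rfl))
    (hG.comap (Function.Embedding.subtype _)) rfl
  by_cases hPtrue : P
  · obtain ⟨S, hS⟩ := hG.compl.exists_isHomogeneousCut_of_erase hA hAc
      (fun a ha b hb h => (compl_adj G a b).mp h |>.2 ((hP a ha b hb).mpr hPtrue))
      (y := ⟨z, hzv⟩) (fun h => (compl_adj G v z).mp h |>.2 hvz)
    exact ⟨S, hS.of_compl⟩
  · exact hG.exists_isHomogeneousCut_of_erase hA hAc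
      (fun a ha b hb h => hPtrue ((hP a ha b hb).mp h)) (y := ⟨y, hyv⟩) hvy

theorem nonempty_realization [Fintype V] [DecidableEq V] [Nonempty V] (hG : IsCograph G)
    {s : ℝ} (hs : s = 1 ∨ s = 2) : Nonempty (Realization G s) := by
  classical
  have hroot : ∀ {t : ℝ}, t = 1 ∨ t = 2 → quartic.eval t = 0 := fun ht =>
    eval_quartic_eq_zero_iff.mpr (by tauto)
  induction hn : Fintype.card V using Nat.strong_induction_on generalizing V s with
  | _ n ih =>
  by_cases hV : Fintype.card V = 1
  · exact ⟨.ofCardEqOne G hV (hroot hs)⟩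
  have : Nontrivial V := Fintype.one_lt_card_iff_nontrivial.mp
    (by have := Fintype.card_pos (α := V); omega)
  obtain ⟨A, ⟨a, ha⟩, ⟨b, hb⟩, P, hP⟩ := hG.exists_isHomogeneousCut
  let e := Equiv.Set.sumCompl A
  have hcross : ∀ a b, (G.comap e).Adj (.inl a) (.inr b) ↔ P := fun a b => by
    simpa [e] using hP a a.2 b b.2
  have : Nonempty A := ⟨⟨a, ha⟩⟩
  have : Nonempty ↥Aᶜ := ⟨⟨b, hb⟩⟩
  have hA : Fintype.card A < n := hn ▸ Fintype.card_subtype_lt hb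
  have hAc : Fintype.card ↥Aᶜ < n := hn ▸ Fintype.card_subtype_lt (not_not.mpr ha)
  have glue : ∀ d c : ℝ, d + c = s → (d = 1 ∨ d = 2) → (P ↔ c ≠ 0) →
      quartic.eval (d - c) = 0 → Nonempty (Realization G s) := by
    rintro d c rfl hd hc hminus
    obtain ⟨R₁⟩ := ih _ hA ((hG.comap e.toEmbedding).comap .inl) hd rfl
    obtain ⟨R₂⟩ := ih _ hAc ((hG.comap e.toEmbedding).comap .inr) hd rfl
    exact ⟨(R₁.glue R₂ (fun a b => (hcross a b).trans hc) (hroot hd) (hroot hs) hminus).map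
      (Iso.comap e G)⟩
  by_cases hPtrue : P
  · rcases hs with rfl | rfl
    · exact glue 2 (-1) (by norm_num) (by norm_num) (by simp [hPtrue])
        (eval_quartic_eq_zero_iff.mpr (by norm_num))
    · exact glue 1 1 (by norm_num) (by norm_num) (by simp [hPtrue])
        (eval_quartic_eq_zero_iff.mpr (by norm_num))
  · exact glue s 0 (add_zero s) hs (by simp [hPtrue]) (by rw [sub_zero]; exact hroot hs)

theorem exists_isSymm_aeval_quartic_eq_zero [Fintype V] [DecidableEq V] (hG : IsCograph G) :
    ∃ M : Matrix V V ℝ, M.IsSymm ∧ (∀ i j, i ≠ j → (M i j ≠ 0 ↔ G.Adj i j)) ∧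
      aeval M quartic = 0 := by
  cases isEmpty_or_nonempty V
  · exact ⟨0, Subsingleton.elim _ _, fun i _ _ => isEmptyElim i, Subsingleton.elim _ _⟩
  · obtain ⟨R⟩ := hG.nonempty_realization (s := 1) (Or.inl rfl)
    exact ⟨R.mat, R.isSymm, R.ne_zero_iff_adj, R.aeval_quartic⟩

end IsCograph

theorem cograph_q_le_four (n : ℕ) (G : SimpleGraph (Fin n)) (hG : IsCograph G) :
    sInf (eigCounts n G) ≤ 4 := by
  obtain ⟨M, hM, hadj, hq⟩ := hG.exists_isSymm_aeval_quartic_eq_zero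
  exact (Nat.sInf_le (show _ ∈ eigCounts n G from ⟨M, hM, hadj, rfl⟩)).trans
    (ncard_spectrum_le_four hq)
end

section
/- Let $G$ be a graph on vertices $\{v_1,\ldots,v_n\}$ where $v_{n-1}=v$ and $v_n=v'$ are false twins, let $G^* = G - v'$, and let $M^* \in S(G^*)$ satisfy $m^*_{vv} = 0$. Define the symmetric matrix $M$ by $m_{uw} = m^*_{uw}$ for $u,w \notin \{v,v'\}$, $m_{uv} = m_{uv'} = m^*_{uv}/\sqrt{2}$ for $u \notin \{v,v'\}$, and $m_{vv} = m_{v'v'} = m_{vv'} = 0$. Then $M \in S(G)$ and the set of eigenvalues of $M$ equals the set of eigenvalues of $M^*$ together with $0$. -/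
/-!
Collapsing `v'` onto `v` is the map `(Fin.last n).predAbove : Fin (n + 2) → Fin (n + 1)`. Let `N`
be the `(n + 2) × (n + 1)` matrix whose row `a` is `w a` times the unit vector at the collapsed
index of `a`, with `w = 1/√2` at `v, v'` and `1` elsewhere. Its columns are orthonormal, and the
hypotheses say exactly that `M = N M* Nᵀ` (the zero diagonal entry of `M*` is what makes the
`v, v'` block of `N M* Nᵀ` vanish). Since `Nᵀ N = 1`, the rectangular identity
`X ^ (n + 1) χ(N (M* Nᵀ)) = X ^ (n + 2) χ(M* Nᵀ N)` gives `χ(M) = X χ(M*)`.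
The nonzero pattern follows entrywise, because for false twins collapsing `v'` onto `v`
preserves adjacency.
-/

open Matrix Polynomial

namespace Matrix

theorem spectrum_mul_mul_of_mul_eq_one {m n K : Type*} [Fintype m] [Fintype n] [DecidableEq m]
    [DecidableEq n] [Field K] (A : Matrix m m K) {N : Matrix n m K} {L : Matrix m n K}
    (hLN : L * N = 1) (hmn : Fintype.card m < Fintype.card n) :
    spectrum K (N * A * L) = spectrum K A ∪ {0} := by
  have hchar : (N * A * L).charpoly = X ^ (Fintype.card n - Fintype.card m) * A.charpoly := by
    rw [Matrix.mul_assoc, charpoly_mul_comm_of_le _ _ hmn.le, Matrix.mul_assoc, hLN,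
      Matrix.mul_one]
  ext μ
  simp [mem_spectrum_iff_isRoot_charpoly, hchar, Nat.sub_ne_zero_of_lt hmn]

section ofPiSingle

variable {m n R : Type*} [DecidableEq m] [CommSemiring R]

def ofPiSingle (π : n → m) (w : n → R) : Matrix n m R :=
  of fun a => Pi.single (π a) (w a)

theorem ofPiSingle_mul_mul_transpose_apply [Fintype m] (π : n → m) (w : n → R)
    (A : Matrix m m R) (a b : n) :
    (ofPiSingle π w * A * (ofPiSingle π w)ᵀ) a b = w a * A (π a) (π b) * w b := by
  simp [ofPiSingle, mul_apply, Pi.single_apply]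

theorem transpose_ofPiSingle_mul_self [Fintype n] {π : n → m} {w : n → R}
    (hw : ∀ k, ∑ a with π a = k, w a ^ 2 = 1) : (ofPiSingle π w)ᵀ * ofPiSingle π w = 1 := by
  ext k l
  simp only [ofPiSingle, mul_apply, transpose_apply, of_apply, Pi.single_apply, one_apply]
  split_ifs with hkl
  · subst hkl
    rw [← hw k, Finset.sum_filter]
    refine Finset.sum_congr rfl fun a _ => ?_
    by_cases h : π a = k
    · simp [h, sq]
    · simp [h, Ne.symm h]
  · refine Finset.sum_eq_zero fun a _ => ?_
    split_ifs with hk hl <;> simp_all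

end ofPiSingle

end Matrix

theorem SimpleGraph.adj_comp_iff_of_twins {V : Type*} (G : SimpleGraph V) {v v' : V}
    (htwin : ∀ w, G.Adj v w ↔ G.Adj v' w) {σ : V → V} (hσ : ∀ a, σ a = a ∨ a = v' ∧ σ a = v)
    (a b : V) : G.Adj (σ a) (σ b) ↔ G.Adj a b := by
  rcases hσ a with ha | ⟨rfl, ha⟩ <;> rcases hσ b with hb | ⟨rfl, hb⟩ <;>
    simp only [ha, hb, SimpleGraph.irrefl]
  · rw [G.adj_comm, htwin, G.adj_comm]
  · exact htwin b

namespace Fin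

theorem castSucc_predAbove_last_eq_or {n : ℕ} (a : Fin (n + 2)) :
    ((last n).predAbove a).castSucc = a ∨ a = last (n + 1) ∧ (last n).predAbove a = last n := by
  obtain ⟨i, rfl⟩ | rfl := a.eq_castSucc_or_eq_last
  · exact .inl (congrArg castSucc predAbove_last_castSucc)
  · exact .inr ⟨rfl, predAbove_right_last⟩

theorem predAbove_last_eq_last_of_ne {n : ℕ} {a b : Fin (n + 2)} (hab : a ≠ b)
    (h : (last n).predAbove a = (last n).predAbove b) : (last n).predAbove a = last n := by
  rcases castSucc_predAbove_last_eq_or a with ha | ha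
  · rcases castSucc_predAbove_last_eq_or b with hb | hb
    · exact absurd (ha.symm.trans ((congrArg castSucc h).trans hb)) hab
    · exact h.trans hb.2
  · exact ha.2

end Fin

theorem SimpleGraph.adj_castSucc_predAbove_last_iff {n : ℕ} (G : SimpleGraph (Fin (n + 2)))
    (htwin : ∀ w, G.Adj (Fin.last n).castSucc w ↔ G.Adj (Fin.last (n + 1)) w) (a b : Fin (n + 2)) :
    G.Adj ((Fin.last n).predAbove a).castSucc ((Fin.last n).predAbove b).castSucc ↔ G.Adj a b :=
  G.adj_comp_iff_of_twins htwin (fun a => (Fin.castSucc_predAbove_last_eq_or a).imp_right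
    fun h => ⟨h.1, congrArg _ h.2⟩) a b

noncomputable def twinWeight (n : ℕ) (a : Fin (n + 2)) : ℝ :=
  if (Fin.last n).predAbove a = Fin.last n then (√2)⁻¹ else 1

theorem twinWeight_ne_zero (n : ℕ) (a : Fin (n + 2)) : twinWeight n a ≠ 0 := by
  unfold twinWeight
  split_ifs <;> simp

theorem sum_twinWeight_sq (n : ℕ) (k : Fin (n + 1)) :
    ∑ a with (Fin.last n).predAbove a = k, twinWeight n a ^ 2 = 1 := by
  rw [Finset.sum_filter, Fin.sum_univ_castSucc]
  by_cases hk : k = Fin.last n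
  · norm_num [twinWeight, hk]
  · simp [twinWeight, hk, Ne.symm hk]

theorem eq_twinWeight_mul_mul_twinWeight {n : ℕ} {Mstar : Matrix (Fin (n + 1)) (Fin (n + 1)) ℝ}
    (hMstarSymm : Mstar.IsSymm) (hdiag : Mstar (Fin.last n) (Fin.last n) = 0)
    {M : Matrix (Fin (n + 2)) (Fin (n + 2)) ℝ} (hMsymm : M.IsSymm)
    (h1 : ∀ u w : Fin n, M u.castSucc.castSucc w.castSucc.castSucc
      = Mstar u.castSucc w.castSucc)
    (h2 : ∀ u : Fin n, M u.castSucc.castSucc (Fin.last n).castSucc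
      = Mstar u.castSucc (Fin.last n) / √2)
    (h3 : ∀ u : Fin n, M u.castSucc.castSucc (Fin.last (n + 1))
      = Mstar u.castSucc (Fin.last n) / √2)
    (h4 : M (Fin.last n).castSucc (Fin.last n).castSucc = 0)
    (h5 : M (Fin.last (n + 1)) (Fin.last (n + 1)) = 0)
    (h6 : M (Fin.last n).castSucc (Fin.last (n + 1)) = 0) (a b : Fin (n + 2)) :
    M a b = twinWeight n a *
      Mstar ((Fin.last n).predAbove a) ((Fin.last n).predAbove b) * twinWeight n b := by
  have hlt (u : Fin n) : u.castSucc ≠ Fin.last n := (Fin.castSucc_lt_last u).ne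
  revert a b
  simp only [Fin.forall_fin_succ', Fin.predAbove_last_castSucc, Fin.predAbove_right_last]
  simp only [h1, twinWeight, ne_eq, Fin.castSucc_ne_last, not_false_eq_true,
    Fin.predAbove_last_of_ne_last, Fin.castPred_castSucc, hlt, ↓reduceIte, one_mul, mul_one,
    implies_true, h2, div_eq_mul_inv, Fin.predAbove_castSucc_self, and_self, h3,
    Fin.predAbove_right_last, h4, hdiag, mul_zero, zero_mul, and_true, h6, true_and, h5]
  refine ⟨fun u => ?_, fun u => ?_, ?_⟩ <;> rw [hMsymm.apply]
  · rw [h2, hMstarSymm.apply, div_eq_mul_inv, mul_comm]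
  · rw [h3, hMstarSymm.apply, div_eq_mul_inv, mul_comm]
  · exact h6

theorem false_twin_duplication_diag_zero (n : ℕ) (G : SimpleGraph (Fin (n + 2)))
    (v v' : Fin (n + 2)) (hv : v = (Fin.last n).castSucc) (hv' : v' = Fin.last (n + 1))
    (htwin : ¬ G.Adj v v' ∧ ∀ w, G.Adj v w ↔ G.Adj v' w)
    (Mstar : Matrix (Fin (n + 1)) (Fin (n + 1)) ℝ) (hMstarSymm : Mstar.IsSymm)
    (hMstarS : ∀ i j : Fin (n + 1), i ≠ j →
      (Mstar i j ≠ 0 ↔ G.Adj i.castSucc j.castSucc))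
    (hdiag : Mstar (Fin.last n) (Fin.last n) = 0)
    (M : Matrix (Fin (n + 2)) (Fin (n + 2)) ℝ) (hMsymm : M.IsSymm)
    (h1 : ∀ u w : Fin n, M u.castSucc.castSucc w.castSucc.castSucc
      = Mstar u.castSucc w.castSucc)
    (h2 : ∀ u : Fin n, M u.castSucc.castSucc v = Mstar u.castSucc (Fin.last n) / Real.sqrt 2)
    (h3 : ∀ u : Fin n, M u.castSucc.castSucc v' = Mstar u.castSucc (Fin.last n) / Real.sqrt 2)
    (h4 : M v v = 0) (h5 : M v' v' = 0) (h6 : M v v' = 0) :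
    (∀ i j, i ≠ j → (M i j ≠ 0 ↔ G.Adj i j)) ∧
      spectrum ℝ M = spectrum ℝ Mstar ∪ {0} := by
  subst hv hv'
  have hM := eq_twinWeight_mul_mul_twinWeight hMstarSymm hdiag hMsymm h1 h2 h3 h4 h5 h6
  refine ⟨fun i j hij => ?_, ?_⟩
  · rw [hM, mul_ne_zero_iff, mul_ne_zero_iff, and_iff_right (twinWeight_ne_zero n i),
      and_iff_left (twinWeight_ne_zero n j), ← G.adj_castSucc_predAbove_last_iff htwin.2]
    by_cases hπ : (Fin.last n).predAbove i = (Fin.last n).predAbove j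
    · have hlast := Fin.predAbove_last_eq_last_of_ne hij hπ
      rw [← hπ, hlast, hdiag]
      simp
    · exact hMstarS _ _ hπ
  · have hconj : M = ofPiSingle (Fin.last n).predAbove (twinWeight n) * Mstar *
        (ofPiSingle (Fin.last n).predAbove (twinWeight n))ᵀ := by
      ext a b
      rw [hM, ofPiSingle_mul_mul_transpose_apply]
    rw [hconj, spectrum_mul_mul_of_mul_eq_one _
      (transpose_ofPiSingle_mul_self (sum_twinWeight_sq n)) (by simp)]
end

section
/- Let $G$ be a graph on vertices $\{v_1,\ldots,v_n\}$ where $v_{n-1}=v$ and $v_n=v'$ are false twins, let $G^* = G - v'$, and let $M^* \in S(G^*)$ satisfy $m^*_{vv} = \lambda$ for some real $\lambda$. Define the symmetric matrix $M$ by $m_{uw} = m^*_{uw}$ for $u,w \notin \{v,v'\}$, $m_{uv} = m_{uv'} = m^*_{uv}/\sqrt{2}$ for $u \notin \{v,v'\}$, $m_{vv} = m_{v'v'} = \lambda$, and $m_{vv'} = 0$. Then $M \in S(G)$ and the set of eigenvalues of $M$ equals the set of eigenvalues of $M^*$ together with $\lambda$. -/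
noncomputable def twinP (n : ℕ) : Matrix (Fin (n + 2)) (Fin (n + 2)) ℝ :=
  Matrix.of fun i j =>
    if i = (Fin.last n).castSucc then
      (if j = (Fin.last n).castSucc then (Real.sqrt 2)⁻¹
       else if j = Fin.last (n + 1) then (Real.sqrt 2)⁻¹ else 0)
    else if i = Fin.last (n + 1) then
      (if j = (Fin.last n).castSucc then (Real.sqrt 2)⁻¹
       else if j = Fin.last (n + 1) then -(Real.sqrt 2)⁻¹ else 0)
    else if j = i then 1 else 0

theorem false_twin_duplication_diag_lambda (n : ℕ) (G : SimpleGraph (Fin (n + 2)))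
    (v v' : Fin (n + 2)) (hv : v = (Fin.last n).castSucc) (hv' : v' = Fin.last (n + 1))
    (htwin : ¬ G.Adj v v' ∧ ∀ w, G.Adj v w ↔ G.Adj v' w)
    (Mstar : Matrix (Fin (n + 1)) (Fin (n + 1)) ℝ) (hMstarSymm : Mstar.IsSymm)
    (hMstarS : ∀ i j : Fin (n + 1), i ≠ j →
      (Mstar i j ≠ 0 ↔ G.Adj i.castSucc j.castSucc))
    (l : ℝ) (hdiag : Mstar (Fin.last n) (Fin.last n) = l)
    (M : Matrix (Fin (n + 2)) (Fin (n + 2)) ℝ) (hMsymm : M.IsSymm)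
    (h1 : ∀ u w : Fin n, M u.castSucc.castSucc w.castSucc.castSucc
      = Mstar u.castSucc w.castSucc)
    (h2 : ∀ u : Fin n, M u.castSucc.castSucc v = Mstar u.castSucc (Fin.last n) / Real.sqrt 2)
    (h3 : ∀ u : Fin n, M u.castSucc.castSucc v' = Mstar u.castSucc (Fin.last n) / Real.sqrt 2)
    (h4 : M v v = l) (h5 : M v' v' = l) (h6 : M v v' = 0) :
    (∀ i j, i ≠ j → (M i j ≠ 0 ↔ G.Adj i j)) ∧
      spectrum ℝ M = spectrum ℝ Mstar ∪ {l} := by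
  subst hv hv'
  have hs0 : Real.sqrt 2 ≠ 0 := by positivity
  have hs2 : Real.sqrt 2 * Real.sqrt 2 = 2 := Real.mul_self_sqrt (by norm_num)
  have hVne : ((Fin.last n).castSucc : Fin (n + 2)) ≠ Fin.last (n + 1) :=
    (Fin.castSucc_lt_last _).ne
  have hUV : ∀ u : Fin n, (u.castSucc.castSucc : Fin (n + 2)) ≠ (Fin.last n).castSucc :=
    fun u h => (Fin.castSucc_lt_last u).ne (Fin.castSucc_injective _ h)
  have hUV' : ∀ u : Fin n, (u.castSucc.castSucc : Fin (n + 2)) ≠ Fin.last (n + 1) :=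
    fun u => (Fin.castSucc_lt_last _).ne
  have hne' : ∀ u : Fin n, (u.castSucc : Fin (n + 1)) ≠ Fin.last n :=
    fun u => (Fin.castSucc_lt_last _).ne
  -- symmetric versions of entry hypotheses
  have h2' : ∀ u : Fin n, M ((Fin.last n).castSucc) u.castSucc.castSucc
      = Mstar u.castSucc (Fin.last n) / Real.sqrt 2 :=
    fun u => (hMsymm.apply _ _).trans (h2 u)
  have h3' : ∀ u : Fin n, M (Fin.last (n + 1)) u.castSucc.castSucc
      = Mstar u.castSucc (Fin.last n) / Real.sqrt 2 :=
    fun u => (hMsymm.apply _ _).trans (h3 u)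
  have h6' : M (Fin.last (n + 1)) ((Fin.last n).castSucc) = 0 :=
    (hMsymm.apply _ _).trans h6
  constructor
  · intro i j hij
    induction i using Fin.lastCases with
    | last =>
      induction j using Fin.lastCases with
      | last => exact absurd rfl hij
      | cast q =>
        induction q using Fin.lastCases with
        | last =>
          rw [h6']
          simp only [ne_eq, not_true_eq_false, false_iff]
          exact fun h => htwin.1 h.symm
        | cast u =>
          rw [hMsymm.apply, h3 u, div_ne_zero_iff]
          have hst := hMstarS u.castSucc (Fin.last n) (hne' u)
          constructor
          · rintro ⟨h, -⟩
            exact (htwin.2 _).mp (hst.mp h).symm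
          · intro h
            exact ⟨hst.mpr ((htwin.2 _).mpr h).symm, hs0⟩
    | cast p =>
      induction p using Fin.lastCases with
      | last =>
        induction j using Fin.lastCases with
        | last =>
          rw [h6]
          simp only [ne_eq, not_true_eq_false, false_iff]
          exact htwin.1
        | cast q =>
          induction q using Fin.lastCases with
          | last => exact absurd rfl hij
          | cast u =>
            rw [hMsymm.apply, h2 u, div_ne_zero_iff]
            have hst := hMstarS u.castSucc (Fin.last n) (hne' u)
            constructor
            · rintro ⟨h, -⟩
              exact (hst.mp h).symm
            · intro h
              exact ⟨hst.mpr h.symm, hs0⟩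
      | cast u =>
        induction j using Fin.lastCases with
        | last =>
          rw [h3 u, div_ne_zero_iff]
          have hst := hMstarS u.castSucc (Fin.last n) (hne' u)
          constructor
          · rintro ⟨h, -⟩
            exact ((htwin.2 _).mp (hst.mp h).symm).symm
          · intro h
            exact ⟨hst.mpr ((htwin.2 _).mpr h.symm).symm, hs0⟩
        | cast q =>
          induction q using Fin.lastCases with
          | last =>
            rw [h2 u, div_ne_zero_iff]
            have hst := hMstarS u.castSucc (Fin.last n) (hne' u)
            constructor
            · rintro ⟨h, -⟩
              exact hst.mp h
            · intro h
              exact ⟨hst.mpr h, hs0⟩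
          | cast w =>
            rw [h1 u w]
            exact hMstarS u.castSucc w.castSucc
              (fun h => hij (by rw [h]))
  · -- spectrum part
    have hcc : (Real.sqrt 2)⁻¹ * (Real.sqrt 2)⁻¹ = 1 / 2 := by
      rw [← mul_inv, hs2]; norm_num
    -- row multiplication lemmas
    have hPrV : ∀ (X : Matrix (Fin (n + 2)) (Fin (n + 2)) ℝ) j,
        (twinP n * X) ((Fin.last n).castSucc) j
          = (Real.sqrt 2)⁻¹ * X ((Fin.last n).castSucc) j + (Real.sqrt 2)⁻¹ * X (Fin.last (n + 1)) j := by
      intro X j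
      rw [Matrix.mul_apply,
        Fintype.sum_eq_add ((Fin.last n).castSucc) (Fin.last (n + 1)) hVne ?_]
      · simp [twinP, hVne, hVne.symm]
      · rintro x ⟨hx1, hx2⟩
        simp [twinP, hx1, hx2, hx1.symm, hx2.symm]
    have hPrV' : ∀ (X : Matrix (Fin (n + 2)) (Fin (n + 2)) ℝ) j,
        (twinP n * X) (Fin.last (n + 1)) j
          = (Real.sqrt 2)⁻¹ * X ((Fin.last n).castSucc) j + -(Real.sqrt 2)⁻¹ * X (Fin.last (n + 1)) j := by
      intro X j
      rw [Matrix.mul_apply,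
        Fintype.sum_eq_add ((Fin.last n).castSucc) (Fin.last (n + 1)) hVne ?_]
      · simp [twinP, hVne, hVne.symm]
      · rintro x ⟨hx1, hx2⟩
        simp [twinP, hx1, hx2, hx1.symm, hx2.symm]
    have hPrU : ∀ (X : Matrix (Fin (n + 2)) (Fin (n + 2)) ℝ) (u : Fin n) j,
        (twinP n * X) u.castSucc.castSucc j = X u.castSucc.castSucc j := by
      intro X u j
      rw [Matrix.mul_apply, Fintype.sum_eq_single u.castSucc.castSucc ?_]
      · simp [twinP, hUV u, hUV' u]
      · intro x hx
        simp [twinP, hUV u, hUV' u, hx]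
    -- column multiplication lemmas
    have hPcV : ∀ (X : Matrix (Fin (n + 2)) (Fin (n + 2)) ℝ) i,
        (X * twinP n) i ((Fin.last n).castSucc)
          = X i ((Fin.last n).castSucc) * (Real.sqrt 2)⁻¹ + X i (Fin.last (n + 1)) * (Real.sqrt 2)⁻¹ := by
      intro X i
      rw [Matrix.mul_apply,
        Fintype.sum_eq_add ((Fin.last n).castSucc) (Fin.last (n + 1)) hVne ?_]
      · simp [twinP, hVne, hVne.symm]
      · rintro x ⟨hx1, hx2⟩
        simp [twinP, hx1, hx2, hx1.symm, hx2.symm]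
    have hPcV' : ∀ (X : Matrix (Fin (n + 2)) (Fin (n + 2)) ℝ) i,
        (X * twinP n) i (Fin.last (n + 1))
          = X i ((Fin.last n).castSucc) * (Real.sqrt 2)⁻¹ + X i (Fin.last (n + 1)) * -(Real.sqrt 2)⁻¹ := by
      intro X i
      rw [Matrix.mul_apply,
        Fintype.sum_eq_add ((Fin.last n).castSucc) (Fin.last (n + 1)) hVne ?_]
      · simp [twinP, hVne, hVne.symm]
      · rintro x ⟨hx1, hx2⟩
        simp [twinP, hx1, hx2, hx1.symm, hx2.symm]
    have hPcU : ∀ (X : Matrix (Fin (n + 2)) (Fin (n + 2)) ℝ) (u : Fin n) i,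
        (X * twinP n) i u.castSucc.castSucc = X i u.castSucc.castSucc := by
      intro X u i
      rw [Matrix.mul_apply, Fintype.sum_eq_single u.castSucc.castSucc ?_]
      · simp [twinP, hUV u, hUV' u]
      · intro x hx
        simp [twinP, hUV u, hUV' u, hx, hx.symm]
    have hhalf : (Real.sqrt 2)⁻¹ * (Real.sqrt 2)⁻¹ = (2 : ℝ)⁻¹ := by
      rw [← mul_inv, hs2]
    -- entries of B = P * M * P
    have e1 : ∀ p q : Fin (n + 1),
        (twinP n * M * twinP n) p.castSucc q.castSucc = Mstar p q := by
      intro p q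
      rw [Matrix.mul_assoc]
      induction p using Fin.lastCases with
      | last =>
        rw [hPrV (M * twinP n)]
        induction q using Fin.lastCases with
        | last =>
          rw [hPcV M, hPcV M, h4, h6, h6', h5, hdiag]
          linear_combination (2 * l) * hhalf
        | cast w =>
          rw [hPcU M w, hPcU M w, h2' w, h3' w,
            show Mstar (Fin.last n) w.castSucc = Mstar w.castSucc (Fin.last n) from
              hMstarSymm.apply _ _]
          linear_combination (2 * Mstar w.castSucc (Fin.last n)) * hhalf
      | cast u =>
        rw [hPrU (M * twinP n) u]
        induction q using Fin.lastCases with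
        | last =>
          rw [hPcV M, h2 u, h3 u]
          linear_combination (2 * Mstar u.castSucc (Fin.last n)) * hhalf
        | cast w =>
          rw [hPcU M w, h1 u w]
    have e2a : ∀ p : Fin (n + 1),
        (twinP n * M * twinP n) p.castSucc (Fin.last (n + 1)) = 0 := by
      intro p
      rw [Matrix.mul_assoc]
      induction p using Fin.lastCases with
      | last =>
        rw [hPrV (M * twinP n), hPcV' M, hPcV' M, h4, h6, h6', h5]
        ring
      | cast u =>
        rw [hPrU (M * twinP n) u, hPcV' M, h2 u, h3 u]
        ring
    have e2b : ∀ q : Fin (n + 1),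
        (twinP n * M * twinP n) (Fin.last (n + 1)) q.castSucc = 0 := by
      intro q
      rw [Matrix.mul_assoc, hPrV' (M * twinP n)]
      induction q using Fin.lastCases with
      | last =>
        rw [hPcV M, hPcV M, h4, h6, h6', h5]
        ring
      | cast w =>
        rw [hPcU M w, hPcU M w, h2' w, h3' w]
        ring
    have e3 : (twinP n * M * twinP n) (Fin.last (n + 1)) (Fin.last (n + 1)) = l := by
      rw [Matrix.mul_assoc, hPrV' (M * twinP n), hPcV' M, hPcV' M, h4, h6, h6', h5]
      linear_combination (2 * l) * hhalf
    -- P * P = 1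
    have hUVs : ∀ u : Fin n, ((Fin.last n).castSucc : Fin (n + 2)) ≠ u.castSucc.castSucc :=
      fun u => (hUV u).symm
    have hUV's : ∀ u : Fin n, (Fin.last (n + 1) : Fin (n + 2)) ≠ u.castSucc.castSucc :=
      fun u => (hUV' u).symm
    have hL2 : ∀ q : Fin n, (Fin.last n : Fin (n + 1)) ≠ q.castSucc :=
      fun q => (Fin.castSucc_lt_last q).ne.symm
    have hPP : twinP n * twinP n = 1 := by
      ext i j
      induction i using Fin.lastCases with
      | last =>
        rw [hPrV' (twinP n) j]
        induction j using Fin.lastCases with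
        | last =>
          simp [twinP, Matrix.one_apply, hVne, hVne.symm]
          linear_combination 2 * hhalf
        | cast q =>
          induction q using Fin.lastCases with
          | last =>
            simp [twinP, Matrix.one_apply, hVne, hVne.symm]
          | cast w =>
            simp [twinP, Matrix.one_apply, hVne, hVne.symm, hUV, hUV', hUVs, hUV's]
      | cast p =>
        induction p using Fin.lastCases with
        | last =>
          rw [hPrV (twinP n) j]
          induction j using Fin.lastCases with
          | last =>
            simp [twinP, Matrix.one_apply, hVne, hVne.symm]
          | cast q =>
            induction q using Fin.lastCases with
            | last =>
              simp [twinP, Matrix.one_apply, hVne, hVne.symm]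
              linear_combination 2 * hhalf
            | cast w =>
              simp [twinP, Matrix.one_apply, hVne, hVne.symm, hUV, hUV', hUVs, hUV's]
        | cast u =>
          rw [hPrU (twinP n) u j]
          induction j using Fin.lastCases with
          | last =>
            simp [twinP, Matrix.one_apply, hVne, hVne.symm, hUV, hUV', hUVs, hUV's]
          | cast q =>
            induction q using Fin.lastCases with
            | last =>
              simp [twinP, Matrix.one_apply, hVne, hVne.symm, hUV, hUV', hUVs, hUV's]
            | cast w =>
              simp only [twinP, Matrix.of_apply, if_neg (hUV u), if_neg (hUV' u)]
              rw [Matrix.one_apply]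
              by_cases h : u.castSucc.castSucc = w.castSucc.castSucc
              · rw [if_pos h.symm, if_pos h]
              · rw [if_neg (Ne.symm h), if_neg h]
    -- determinant identity
    have hdet : ∀ μ : ℝ,
        (algebraMap ℝ (Matrix (Fin (n + 2)) (Fin (n + 2)) ℝ) μ - twinP n * M * twinP n).det
          = (μ - l) * (algebraMap ℝ (Matrix (Fin (n + 1)) (Fin (n + 1)) ℝ) μ - Mstar).det := by
      intro μ
      rw [Matrix.det_succ_row _ (Fin.last (n + 1))]
      rw [Fintype.sum_eq_single (Fin.last (n + 1)) ?_]
      · have hpow : ((-1 : ℝ)) ^ ((Fin.last (n + 1) : ℕ) + (Fin.last (n + 1) : ℕ)) = 1 := by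
          rw [← two_mul, pow_mul]
          norm_num
        rw [hpow, one_mul]
        have hAll : (algebraMap ℝ (Matrix (Fin (n + 2)) (Fin (n + 2)) ℝ) μ
            - twinP n * M * twinP n) (Fin.last (n + 1)) (Fin.last (n + 1)) = μ - l := by
          rw [Matrix.sub_apply, Matrix.algebraMap_matrix_apply, if_pos rfl, e3]
          rfl
        rw [hAll, Fin.succAbove_last]
        have hsub : (algebraMap ℝ (Matrix (Fin (n + 2)) (Fin (n + 2)) ℝ) μ
              - twinP n * M * twinP n).submatrix Fin.castSucc Fin.castSucc
            = algebraMap ℝ (Matrix (Fin (n + 1)) (Fin (n + 1)) ℝ) μ - Mstar := by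
          ext p q
          rw [Matrix.submatrix_apply, Matrix.sub_apply, Matrix.sub_apply,
            Matrix.algebraMap_matrix_apply, Matrix.algebraMap_matrix_apply, e1 p q]
          congr 1
          simp [Fin.castSucc_inj]
        rw [hsub]
      · intro x hx
        obtain ⟨q, rfl⟩ := Fin.exists_castSucc_eq.mpr hx
        rw [Matrix.sub_apply, Matrix.algebraMap_matrix_apply,
          if_neg (Ne.symm (Fin.castSucc_lt_last q).ne), e2b q]
        ring
    -- relating M and B by conjugation
    have hMB : ∀ μ : ℝ,
        (algebraMap ℝ (Matrix (Fin (n + 2)) (Fin (n + 2)) ℝ) μ - M).det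
          = (algebraMap ℝ (Matrix (Fin (n + 2)) (Fin (n + 2)) ℝ) μ - twinP n * M * twinP n).det := by
      intro μ
      have hM' : twinP n * (algebraMap ℝ (Matrix (Fin (n + 2)) (Fin (n + 2)) ℝ) μ - M) * twinP n
          = algebraMap ℝ (Matrix (Fin (n + 2)) (Fin (n + 2)) ℝ) μ - twinP n * M * twinP n := by
        rw [Matrix.mul_sub, Matrix.sub_mul]
        congr 1
        rw [Algebra.algebraMap_eq_smul_one, Matrix.mul_smul, Matrix.smul_mul, mul_one, hPP]
      have hdP : (twinP n).det * (twinP n).det = 1 := by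
        rw [← Matrix.det_mul, hPP, Matrix.det_one]
      calc (algebraMap ℝ (Matrix (Fin (n + 2)) (Fin (n + 2)) ℝ) μ - M).det
          = (twinP n).det * (algebraMap ℝ (Matrix (Fin (n + 2)) (Fin (n + 2)) ℝ) μ - M).det
              * (twinP n).det := by
            rw [mul_comm ((twinP n).det), mul_assoc, hdP, mul_one]
        _ = (twinP n * (algebraMap ℝ (Matrix (Fin (n + 2)) (Fin (n + 2)) ℝ) μ - M) * twinP n).det := by
            rw [Matrix.det_mul, Matrix.det_mul]
        _ = _ := by rw [hM']
    -- conclude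
    ext μ
    simp only [spectrum.mem_iff, Matrix.isUnit_iff_isUnit_det, isUnit_iff_ne_zero, not_not,
      Set.mem_union, Set.mem_singleton_iff]
    rw [hMB μ, hdet μ, mul_eq_zero, sub_eq_zero]
    tauto
end

section
/- Let $G$ be a graph on vertices $\{v_1,\ldots,v_n\}$ where $v_{n-1}=v$ and $v_n=v'$ are true twins, let $G^* = G - v'$, and let $M^* \in S(G^*)$ satisfy $m^*_{vv} = 0$. Define the symmetric matrix $M$ by $m_{uw} = m^*_{uw}$ for $u,w \notin \{v,v'\}$, $m_{uv} = m_{uv'} = m^*_{uv}/\sqrt{2}$ for $u \notin \{v,v'\}$, $m_{vv} = m_{v'v'} = \lambda$, and $m_{vv'} = -\lambda$, for a nonzero real $\lambda$. Then $M \in S(G)$ and the set of eigenvalues of $M$ equals the set of eigenvalues of $M^*$ together with $2\lambda$. -/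
open Matrix

noncomputable def Qm (n : ℕ) : Matrix (Fin (n+2)) (Fin (n+2)) ℝ :=
  Matrix.of fun i j =>
    if i.val < n ∨ j.val < n then (if i = j then 1 else 0)
    else if i.val = n + 1 ∧ j.val = n + 1 then -(Real.sqrt 2)⁻¹ else (Real.sqrt 2)⁻¹

def Nm (n : ℕ) (Mstar : Matrix (Fin (n+1)) (Fin (n+1)) ℝ) (l : ℝ) :
    Matrix (Fin (n+2)) (Fin (n+2)) ℝ :=
  Matrix.of fun i j =>
    if hi : i.val < n + 1 then (if hj : j.val < n + 1 then Mstar ⟨i.val, hi⟩ ⟨j.val, hj⟩ else 0)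
    else if j.val < n + 1 then 0 else 2 * l

section lems
variable {n : ℕ}

lemma fin_tri (i : Fin (n+2)) :
    (∃ k : Fin n, i = k.castSucc.castSucc) ∨ i = (Fin.last n).castSucc ∨ i = Fin.last (n+1) := by
  rcases lt_trichotomy i.val n with h | h | h
  · exact Or.inl ⟨⟨i.val, h⟩, by ext; simp⟩
  · exact Or.inr (Or.inl (by ext; simp [h]))
  · refine Or.inr (Or.inr ?_)
    ext
    simp only [Fin.val_last]
    omega

lemma Qm_apply_lt {i j : Fin (n+2)} (h : i.val < n ∨ j.val < n) :
    Qm n i j = if i = j then 1 else 0 := if_pos h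

lemma Qm_vv_vv : Qm n ((Fin.last n).castSucc) ((Fin.last n).castSucc) = (Real.sqrt 2)⁻¹ := by
  simp [Qm]

lemma Qm_vv_w : Qm n ((Fin.last n).castSucc) (Fin.last (n+1)) = (Real.sqrt 2)⁻¹ := by
  simp [Qm]

lemma Qm_w_vv : Qm n (Fin.last (n+1)) ((Fin.last n).castSucc) = (Real.sqrt 2)⁻¹ := by
  simp [Qm]

lemma Qm_w_w : Qm n (Fin.last (n+1)) (Fin.last (n+1)) = -(Real.sqrt 2)⁻¹ := by
  simp [Qm]

lemma mul_Qm_lt (A : Matrix (Fin (n+2)) (Fin (n+2)) ℝ) (i : Fin (n+2)) {j : Fin (n+2)}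
    (hj : j.val < n) : (A * Qm n) i j = A i j := by
  rw [Matrix.mul_apply]
  have h : ∀ k, Qm n k j = if k = j then 1 else 0 := fun k => Qm_apply_lt (Or.inr hj)
  simp [h, mul_ite]

lemma mul_Qm_vv (A : Matrix (Fin (n+2)) (Fin (n+2)) ℝ) (i : Fin (n+2)) :
    (A * Qm n) i ((Fin.last n).castSucc)
      = (Real.sqrt 2)⁻¹ * (A i ((Fin.last n).castSucc) + A i (Fin.last (n+1))) := by
  rw [Matrix.mul_apply, Fin.sum_univ_castSucc, Fin.sum_univ_castSucc]
  have h0 : ∀ k : Fin n, Qm n k.castSucc.castSucc ((Fin.last n).castSucc) = 0 := by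
    intro k
    rw [Qm_apply_lt (Or.inl (by simp [k.isLt]))]
    have : k.castSucc.castSucc ≠ (Fin.last n).castSucc := by
      simp [Fin.ext_iff]; omega
    simp [this]
  simp [h0, Qm_vv_vv, Qm_w_vv]
  ring

lemma mul_Qm_w (A : Matrix (Fin (n+2)) (Fin (n+2)) ℝ) (i : Fin (n+2)) :
    (A * Qm n) i (Fin.last (n+1))
      = (Real.sqrt 2)⁻¹ * (A i ((Fin.last n).castSucc) - A i (Fin.last (n+1))) := by
  rw [Matrix.mul_apply, Fin.sum_univ_castSucc, Fin.sum_univ_castSucc]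
  have h0 : ∀ k : Fin n, Qm n k.castSucc.castSucc (Fin.last (n+1)) = 0 := by
    intro k
    rw [Qm_apply_lt (Or.inl (by simp [k.isLt]))]
    have : k.castSucc.castSucc ≠ Fin.last (n+1) := by
      simp [Fin.ext_iff]; omega
    simp [this]
  simp [h0, Qm_vv_w, Qm_w_w]
  ring

lemma Qm_mul_lt (A : Matrix (Fin (n+2)) (Fin (n+2)) ℝ) {i : Fin (n+2)} (j : Fin (n+2))
    (hi : i.val < n) : (Qm n * A) i j = A i j := by
  rw [Matrix.mul_apply]
  have h : ∀ k, Qm n i k = if i = k then 1 else 0 := fun k => Qm_apply_lt (Or.inl hi)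
  simp [h, ite_mul]

lemma Qm_mul_vv (A : Matrix (Fin (n+2)) (Fin (n+2)) ℝ) (j : Fin (n+2)) :
    (Qm n * A) ((Fin.last n).castSucc) j
      = (Real.sqrt 2)⁻¹ * (A ((Fin.last n).castSucc) j + A (Fin.last (n+1)) j) := by
  rw [Matrix.mul_apply, Fin.sum_univ_castSucc, Fin.sum_univ_castSucc]
  have h0 : ∀ k : Fin n, Qm n ((Fin.last n).castSucc) k.castSucc.castSucc = 0 := by
    intro k
    rw [Qm_apply_lt (Or.inr (by simp [k.isLt]))]
    have : (Fin.last n).castSucc ≠ k.castSucc.castSucc := by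
      simp [Fin.ext_iff]; omega
    simp [this]
  simp [h0, Qm_vv_vv, Qm_vv_w]
  ring

lemma Qm_mul_w (A : Matrix (Fin (n+2)) (Fin (n+2)) ℝ) (j : Fin (n+2)) :
    (Qm n * A) (Fin.last (n+1)) j
      = (Real.sqrt 2)⁻¹ * (A ((Fin.last n).castSucc) j - A (Fin.last (n+1)) j) := by
  rw [Matrix.mul_apply, Fin.sum_univ_castSucc, Fin.sum_univ_castSucc]
  have h0 : ∀ k : Fin n, Qm n (Fin.last (n+1)) k.castSucc.castSucc = 0 := by
    intro k
    rw [Qm_apply_lt (Or.inr (by simp [k.isLt]))]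
    have : Fin.last (n+1) ≠ k.castSucc.castSucc := by
      simp [Fin.ext_iff]; omega
    simp [this]
  simp [h0, Qm_w_vv, Qm_w_w]
  ring

end lems

lemma sqrt2_inv_mul : (Real.sqrt 2)⁻¹ * (Real.sqrt 2)⁻¹ * 2 = 1 := by
  rw [← mul_inv, Real.mul_self_sqrt (by norm_num)]; norm_num

lemma vv_ne_cc {n : ℕ} (k : Fin n) : (Fin.last n).castSucc ≠ k.castSucc.castSucc := by
  simp [Fin.ext_iff]; omega

lemma w_ne_cc {n : ℕ} (k : Fin n) : Fin.last (n+1) ≠ k.castSucc.castSucc := by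
  simp [Fin.ext_iff]; omega

lemma vv_ne_w {n : ℕ} : (Fin.last n).castSucc ≠ Fin.last (n+1) := by
  simp [Fin.ext_iff]

lemma Qm_mul_Qm {n : ℕ} : Qm n * Qm n = 1 := by
  ext i j
  rcases fin_tri i with ⟨k, rfl⟩ | rfl | rfl
  · rw [Qm_mul_lt _ _ (by simp [k.isLt]), Qm_apply_lt (Or.inl (by simp [k.isLt])),
      Matrix.one_apply]
  · rw [Qm_mul_vv]
    rcases fin_tri j with ⟨m, rfl⟩ | rfl | rfl
    · rw [Qm_apply_lt (Or.inr (by simp [m.isLt])), Qm_apply_lt (Or.inr (by simp [m.isLt])),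
        Matrix.one_apply_ne (vv_ne_cc m)]
      simp [vv_ne_cc m, w_ne_cc m]
    · rw [Qm_vv_vv, Qm_w_vv, Matrix.one_apply_eq]
      have := sqrt2_inv_mul; nlinarith [this]
    · rw [Qm_vv_w, Qm_w_w, Matrix.one_apply_ne vv_ne_w]
      ring
  · rw [Qm_mul_w]
    rcases fin_tri j with ⟨m, rfl⟩ | rfl | rfl
    · rw [Qm_apply_lt (Or.inr (by simp [m.isLt])), Qm_apply_lt (Or.inr (by simp [m.isLt])),
        Matrix.one_apply_ne (w_ne_cc m)]
      simp [vv_ne_cc m, w_ne_cc m]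
    · rw [Qm_vv_vv, Qm_w_vv, Matrix.one_apply_ne vv_ne_w.symm]
      ring
    · rw [Qm_vv_w, Qm_w_w, Matrix.one_apply_eq]
      have := sqrt2_inv_mul; nlinarith [this]

section conj
variable {n : ℕ} {Mstar : Matrix (Fin (n+1)) (Fin (n+1)) ℝ} {l : ℝ}

lemma Nm_cc_cc (k m : Fin n) :
    Nm n Mstar l k.castSucc.castSucc m.castSucc.castSucc = Mstar k.castSucc m.castSucc := by
  have hk : (k.castSucc.castSucc : Fin (n+2)).val < n + 1 := by simp [k.isLt]
  have hm : (m.castSucc.castSucc : Fin (n+2)).val < n + 1 := by simp [m.isLt]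
  simp only [Nm, Matrix.of_apply, dif_pos hk, dif_pos hm]
  congr 1

lemma Nm_cc_vv (k : Fin n) :
    Nm n Mstar l k.castSucc.castSucc ((Fin.last n).castSucc) = Mstar k.castSucc (Fin.last n) := by
  have hk : (k.castSucc.castSucc : Fin (n+2)).val < n + 1 := by simp [k.isLt]
  have hm : ((Fin.last n).castSucc : Fin (n+2)).val < n + 1 := by simp
  simp only [Nm, Matrix.of_apply, dif_pos hk, dif_pos hm]
  congr 1

lemma Nm_vv_cc (k : Fin n) :
    Nm n Mstar l ((Fin.last n).castSucc) k.castSucc.castSucc = Mstar (Fin.last n) k.castSucc := by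
  have hk : (k.castSucc.castSucc : Fin (n+2)).val < n + 1 := by simp [k.isLt]
  have hm : ((Fin.last n).castSucc : Fin (n+2)).val < n + 1 := by simp
  simp only [Nm, Matrix.of_apply, dif_pos hk, dif_pos hm]
  congr 1

lemma Nm_vv_vv :
    Nm n Mstar l ((Fin.last n).castSucc) ((Fin.last n).castSucc)
      = Mstar (Fin.last n) (Fin.last n) := by
  have hm : ((Fin.last n).castSucc : Fin (n+2)).val < n + 1 := by simp
  simp only [Nm, Matrix.of_apply, dif_pos hm]
  congr 1

lemma Nm_cc_w (k : Fin n) : Nm n Mstar l k.castSucc.castSucc (Fin.last (n+1)) = 0 := by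
  have hk : (k.castSucc.castSucc : Fin (n+2)).val < n + 1 := by simp [k.isLt]
  simp only [Nm, Matrix.of_apply, dif_pos hk]
  rw [dif_neg (by simp)]

lemma Nm_w_cc (k : Fin n) : Nm n Mstar l (Fin.last (n+1)) k.castSucc.castSucc = 0 := by
  have hk : (k.castSucc.castSucc : Fin (n+2)).val < n + 1 := by simp [k.isLt]
  simp only [Nm, Matrix.of_apply]
  rw [dif_neg (by simp), if_pos hk]

lemma Nm_vv_w : Nm n Mstar l ((Fin.last n).castSucc) (Fin.last (n+1)) = 0 := by simp [Nm]

lemma Nm_w_vv : Nm n Mstar l (Fin.last (n+1)) ((Fin.last n).castSucc) = 0 := by simp [Nm]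

lemma Nm_w_w : Nm n Mstar l (Fin.last (n+1)) (Fin.last (n+1)) = 2 * l := by simp [Nm]

lemma QMQ (hMstarSymm : Mstar.IsSymm)
    (hdiag : Mstar (Fin.last n) (Fin.last n) = 0)
    (M : Matrix (Fin (n+2)) (Fin (n+2)) ℝ)
    (h1 : ∀ u w : Fin n, M u.castSucc.castSucc w.castSucc.castSucc = Mstar u.castSucc w.castSucc)
    (h2 : ∀ u : Fin n, M u.castSucc.castSucc ((Fin.last n).castSucc)
      = Mstar u.castSucc (Fin.last n) / Real.sqrt 2)
    (h3 : ∀ u : Fin n, M u.castSucc.castSucc (Fin.last (n+1))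
      = Mstar u.castSucc (Fin.last n) / Real.sqrt 2)
    (h2' : ∀ u : Fin n, M ((Fin.last n).castSucc) u.castSucc.castSucc
      = Mstar u.castSucc (Fin.last n) / Real.sqrt 2)
    (h3' : ∀ u : Fin n, M (Fin.last (n+1)) u.castSucc.castSucc
      = Mstar u.castSucc (Fin.last n) / Real.sqrt 2)
    (h4 : M ((Fin.last n).castSucc) ((Fin.last n).castSucc) = l)
    (h5 : M (Fin.last (n+1)) (Fin.last (n+1)) = l)
    (h6 : M ((Fin.last n).castSucc) (Fin.last (n+1)) = -l)
    (h6' : M (Fin.last (n+1)) ((Fin.last n).castSucc) = -l) :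
    Qm n * M * Qm n = Nm n Mstar l := by
  have hs2 := sqrt2_inv_mul
  have hsne : Real.sqrt 2 ≠ 0 := by positivity
  ext i j
  rcases fin_tri j with ⟨m, rfl⟩ | rfl | rfl
  · rw [mul_Qm_lt _ _ (by simp [m.isLt])]
    rcases fin_tri i with ⟨k, rfl⟩ | rfl | rfl
    · rw [Qm_mul_lt _ _ (by simp [k.isLt]), h1, Nm_cc_cc]
    · rw [Qm_mul_vv, h2', h3', Nm_vv_cc, hMstarSymm.apply, div_eq_mul_inv]
      linear_combination (Mstar (Fin.last n) m.castSucc) * hs2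
    · rw [Qm_mul_w, h2', h3', Nm_w_cc]
      ring
  · rw [mul_Qm_vv]
    rcases fin_tri i with ⟨k, rfl⟩ | rfl | rfl
    · rw [Qm_mul_lt _ _ (by simp [k.isLt]), Qm_mul_lt _ _ (by simp [k.isLt]),
        h2, h3, Nm_cc_vv, div_eq_mul_inv]
      linear_combination (Mstar k.castSucc (Fin.last n)) * hs2
    · rw [Qm_mul_vv, Qm_mul_vv, h4, h5, h6, h6', Nm_vv_vv, hdiag]
      ring
    · rw [Qm_mul_w, Qm_mul_w, h4, h5, h6, h6', Nm_w_vv]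
      ring
  · rw [mul_Qm_w]
    rcases fin_tri i with ⟨k, rfl⟩ | rfl | rfl
    · rw [Qm_mul_lt _ _ (by simp [k.isLt]), Qm_mul_lt _ _ (by simp [k.isLt]),
        h2, h3, Nm_cc_w]
      ring
    · rw [Qm_mul_vv, Qm_mul_vv, h4, h5, h6, h6', Nm_vv_w]
      ring
    · rw [Qm_mul_w, Qm_mul_w, h4, h5, h6, h6', Nm_w_w]
      linear_combination (2*l) * hs2

end conj

section detN
variable {n : ℕ} {Mstar : Matrix (Fin (n+1)) (Fin (n+1)) ℝ} {l : ℝ}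

lemma Nm_submatrix :
    (Nm n Mstar l).submatrix (finSumFinEquiv : Fin (n+1) ⊕ Fin 1 ≃ Fin (n+2)) (finSumFinEquiv : Fin (n+1) ⊕ Fin 1 ≃ Fin (n+2))
      = fromBlocks Mstar 0 0 (Matrix.of fun (_ _ : Fin 1) => 2 * l) := by
  ext i j
  rcases i with i | i <;> rcases j with j | j <;>
    simp only [Matrix.submatrix_apply, finSumFinEquiv_apply_left, finSumFinEquiv_apply_right,
      fromBlocks_apply₁₁, fromBlocks_apply₁₂, fromBlocks_apply₂₁, fromBlocks_apply₂₂]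
  · have hi : (Fin.castAdd 1 i).val < n + 1 := i.isLt
    have hj : (Fin.castAdd 1 j).val < n + 1 := j.isLt
    simp only [Nm, Matrix.of_apply, dif_pos hi, dif_pos hj]
    congr 1
  · have hi : (Fin.castAdd 1 i).val < n + 1 := i.isLt
    have hj : ¬ ((Fin.natAdd (n+1) j).val < n + 1) := by simp
    simp only [Nm, Matrix.of_apply, dif_pos hi, dif_neg hj]
    rfl
  · have hi : ¬ ((Fin.natAdd (n+1) i).val < n + 1) := by simp
    have hj : (Fin.castAdd 1 j).val < n + 1 := j.isLt
    simp only [Nm, Matrix.of_apply, dif_neg hi, if_pos hj]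
    rfl
  · have hi : ¬ ((Fin.natAdd (n+1) i).val < n + 1) := by simp
    have hj : ¬ ((Fin.natAdd (n+1) j).val < n + 1) := by simp
    simp only [Nm, Matrix.of_apply, dif_neg hi, if_neg hj]

lemma det_Nm (x : ℝ) :
    (x • (1 : Matrix (Fin (n+2)) (Fin (n+2)) ℝ) - Nm n Mstar l).det
      = (x • (1 : Matrix (Fin (n+1)) (Fin (n+1)) ℝ) - Mstar).det * (x - 2 * l) := by
  rw [← Matrix.det_submatrix_equiv_self (finSumFinEquiv : Fin (n+1) ⊕ Fin 1 ≃ Fin (n+2))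
    (x • (1 : Matrix (Fin (n+2)) (Fin (n+2)) ℝ) - Nm n Mstar l)]
  have : (x • (1 : Matrix (Fin (n+2)) (Fin (n+2)) ℝ) - Nm n Mstar l).submatrix
      (finSumFinEquiv : Fin (n+1) ⊕ Fin 1 ≃ Fin (n+2)) (finSumFinEquiv : Fin (n+1) ⊕ Fin 1 ≃ Fin (n+2))
      = fromBlocks (x • 1 - Mstar) 0 0 (x • 1 - Matrix.of fun (_ _ : Fin 1) => 2 * l) := by
    have hsub : (x • (1 : Matrix (Fin (n+2)) (Fin (n+2)) ℝ) - Nm n Mstar l).submatrix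
        (finSumFinEquiv : Fin (n+1) ⊕ Fin 1 ≃ Fin (n+2)) (finSumFinEquiv : Fin (n+1) ⊕ Fin 1 ≃ Fin (n+2))
        = x • ((1 : Matrix (Fin (n+2)) (Fin (n+2)) ℝ).submatrix
            (finSumFinEquiv : Fin (n+1) ⊕ Fin 1 ≃ Fin (n+2)) (finSumFinEquiv : Fin (n+1) ⊕ Fin 1 ≃ Fin (n+2)))
          - (Nm n Mstar l).submatrix
            (finSumFinEquiv : Fin (n+1) ⊕ Fin 1 ≃ Fin (n+2)) (finSumFinEquiv : Fin (n+1) ⊕ Fin 1 ≃ Fin (n+2)) := by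
      ext i j
      simp only [Matrix.submatrix_apply, Matrix.sub_apply, Matrix.smul_apply]
    rw [hsub, Matrix.submatrix_one_equiv, Nm_submatrix, ← Matrix.fromBlocks_one,
      Matrix.fromBlocks_smul, sub_eq_add_neg, Matrix.fromBlocks_neg, Matrix.fromBlocks_add]
    congr 1 <;> simp [sub_eq_add_neg]
  rw [this, Matrix.det_fromBlocks_zero₂₁, Matrix.det_fin_one]
  congr 1
  simp [Matrix.one_apply]

end detN

lemma mem_spectrum_iff_det {m : Type*} [Fintype m] [DecidableEq m] (A : Matrix m m ℝ) (x : ℝ) :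
    x ∈ spectrum ℝ A ↔ (x • (1 : Matrix m m ℝ) - A).det = 0 := by
  rw [spectrum.mem_iff, Matrix.isUnit_iff_isUnit_det, isUnit_iff_ne_zero, not_not,
    Algebra.algebraMap_eq_smul_one]

theorem true_twin_duplication_diag_zero (n : ℕ) (G : SimpleGraph (Fin (n + 2)))
    (v v' : Fin (n + 2)) (hv : v = (Fin.last n).castSucc) (hv' : v' = Fin.last (n + 1))
    (htwin : G.Adj v v' ∧ ∀ w, w ≠ v → w ≠ v' → (G.Adj v w ↔ G.Adj v' w))
    (Mstar : Matrix (Fin (n + 1)) (Fin (n + 1)) ℝ) (hMstarSymm : Mstar.IsSymm)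
    (hMstarS : ∀ i j : Fin (n + 1), i ≠ j →
      (Mstar i j ≠ 0 ↔ G.Adj i.castSucc j.castSucc))
    (l : ℝ) (hl : l ≠ 0) (hdiag : Mstar (Fin.last n) (Fin.last n) = 0)
    (M : Matrix (Fin (n + 2)) (Fin (n + 2)) ℝ) (hMsymm : M.IsSymm)
    (h1 : ∀ u w : Fin n, M u.castSucc.castSucc w.castSucc.castSucc
      = Mstar u.castSucc w.castSucc)
    (h2 : ∀ u : Fin n, M u.castSucc.castSucc v = Mstar u.castSucc (Fin.last n) / Real.sqrt 2)
    (h3 : ∀ u : Fin n, M u.castSucc.castSucc v' = Mstar u.castSucc (Fin.last n) / Real.sqrt 2)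
    (h4 : M v v = l) (h5 : M v' v' = l) (h6 : M v v' = -l) :
    (∀ i j, i ≠ j → (M i j ≠ 0 ↔ G.Adj i j)) ∧
      spectrum ℝ M = spectrum ℝ Mstar ∪ {2 * l} := by
  subst hv hv'
  have hsne : Real.sqrt 2 ≠ 0 := by positivity
  have h2' : ∀ u : Fin n, M ((Fin.last n).castSucc) u.castSucc.castSucc
      = Mstar u.castSucc (Fin.last n) / Real.sqrt 2 := fun u => (hMsymm.apply _ _).trans (h2 u)
  have h3' : ∀ u : Fin n, M (Fin.last (n+1)) u.castSucc.castSucc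
      = Mstar u.castSucc (Fin.last n) / Real.sqrt 2 := fun u => (hMsymm.apply _ _).trans (h3 u)
  have h6' : M (Fin.last (n+1)) ((Fin.last n).castSucc) = -l := (hMsymm.apply _ _).trans h6
  constructor
  · intro i j hij
    rcases fin_tri i with ⟨k, rfl⟩ | rfl | rfl <;> rcases fin_tri j with ⟨m, rfl⟩ | rfl | rfl
    · rw [h1]
      exact hMstarS k.castSucc m.castSucc
        (fun h => hij (by rw [show k = m from Fin.castSucc_injective _
          (Fin.castSucc_injective _ (by exact congrArg Fin.castSucc h ▸ rfl))]))
    · rw [h2, div_ne_zero_iff]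
      have hne : k.castSucc ≠ Fin.last n := by
        intro h; exact absurd (congrArg Fin.val h) (by simp [Fin.ext_iff]; omega)
      rw [hMstarS k.castSucc (Fin.last n) hne]
      simp [hsne]
    · rw [h3, div_ne_zero_iff]
      have hne : k.castSucc ≠ Fin.last n := by
        intro h; exact absurd (congrArg Fin.val h) (by simp [Fin.ext_iff]; omega)
      rw [hMstarS k.castSucc (Fin.last n) hne]
      have hnv : k.castSucc.castSucc ≠ (Fin.last n).castSucc := (vv_ne_cc k).symm
      have hnw : k.castSucc.castSucc ≠ Fin.last (n+1) := (w_ne_cc k).symm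
      rw [G.adj_comm, htwin.2 _ hnv hnw, G.adj_comm]
      simp [hsne]
    · rw [hMsymm.apply, h2, div_ne_zero_iff]
      have hne : m.castSucc ≠ Fin.last n := by
        intro h; exact absurd (congrArg Fin.val h) (by simp [Fin.ext_iff]; omega)
      rw [hMstarS m.castSucc (Fin.last n) hne, G.adj_comm]
      simp [hsne]
    · exact absurd rfl hij
    · rw [h6]
      simp only [ne_eq, neg_eq_zero]
      exact iff_of_true hl htwin.1
    · rw [hMsymm.apply, h3, div_ne_zero_iff]
      have hne : m.castSucc ≠ Fin.last n := by
        intro h; exact absurd (congrArg Fin.val h) (by simp [Fin.ext_iff]; omega)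
      rw [hMstarS m.castSucc (Fin.last n) hne]
      have hnv : m.castSucc.castSucc ≠ (Fin.last n).castSucc := (vv_ne_cc m).symm
      have hnw : m.castSucc.castSucc ≠ Fin.last (n+1) := (w_ne_cc m).symm
      rw [G.adj_comm, htwin.2 _ hnv hnw]
      simp [hsne]
    · rw [h6']
      simp only [ne_eq, neg_eq_zero]
      exact iff_of_true hl htwin.1.symm
    · exact absurd rfl hij
  · have hQMQ : Qm n * M * Qm n = Nm n Mstar l :=
      QMQ hMstarSymm hdiag M h1 h2 h3 h2' h3' h4 h5 h6 h6'
    have hM : M = Qm n * Nm n Mstar l * Qm n := by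
      rw [← hQMQ, show Qm n * (Qm n * M * Qm n) * Qm n = (Qm n * Qm n) * M * (Qm n * Qm n) by
        noncomm_ring, Qm_mul_Qm, one_mul, mul_one]
    have hdet : ∀ x : ℝ, (x • (1 : Matrix (Fin (n+2)) (Fin (n+2)) ℝ) - M).det
        = (x • (1 : Matrix (Fin (n+1)) (Fin (n+1)) ℝ) - Mstar).det * (x - 2 * l) := by
      intro x
      have key : x • (1 : Matrix (Fin (n+2)) (Fin (n+2)) ℝ) - M
          = Qm n * (x • (1 : Matrix (Fin (n+2)) (Fin (n+2)) ℝ) - Nm n Mstar l) * Qm n := by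
        rw [hM, Matrix.mul_sub, Matrix.sub_mul, Matrix.mul_smul, Matrix.smul_mul, Matrix.mul_one, Qm_mul_Qm]
      have hdq : (Qm n).det * (Qm n).det = 1 := by
        rw [← Matrix.det_mul, Qm_mul_Qm, Matrix.det_one]
      rw [key, Matrix.det_mul, Matrix.det_mul, det_Nm]
      linear_combination ((x • (1 : Matrix (Fin (n+1)) (Fin (n+1)) ℝ) - Mstar).det * (x - 2 * l)) * hdq
    ext x
    rw [mem_spectrum_iff_det, hdet x, Set.mem_union, Set.mem_singleton_iff,
      mem_spectrum_iff_det, mul_eq_zero, sub_eq_zero]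
end

section
/- Let $G$ be a graph on vertices $\{v_1,\ldots,v_n\}$ where $v_{n-1}=v$ and $v_n=v'$ are true twins, let $G^* = G - v'$, and let $M^* \in S(G^*)$ satisfy $m^*_{vv} = \lambda$ for some nonzero real $\lambda$. Define the symmetric matrix $M$ by $m_{uw} = m^*_{uw}$ for $u,w \notin \{v,v'\}$, $m_{uv} = m_{uv'} = m^*_{uv}/\sqrt{2}$ for $u \notin \{v,v'\}$, $m_{vv} = m_{v'v'} = 0$, and $m_{vv'} = \lambda$. Then $M \in S(G)$ and the set of eigenvalues of $M$ equals the set of eigenvalues of $M^*$ together with $-\lambda$. -/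
/-!
Split `ℝ^(n+2)` into the vectors that agree on the twins `v, v'`, identified with `ℝ^(n+1)` by
`y ↦ (y_u, y_v / √2, y_v / √2)`, and the line spanned by `e_v - e_v'`. The matrix `M` preserves
both pieces: on the first it acts as `M*` (a row `u` meets `v` and `v'` with weight `(1/√2)²`
each, which add up to the single entry `m*_{uv}`), and on the second by `-λ`. Hence the eigenvalues of `M` are those of `M*` together
with `-λ`.
-/

open Matrix

theorem Matrix.mem_spectrum_iff_exists_mulVec_eq_smul_s9 {K n : Type*} [Field K] [Fintype n]
    [DecidableEq n] {A : Matrix n n K} {μ : K} :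
    μ ∈ spectrum K A ↔ ∃ x ≠ 0, A *ᵥ x = μ • x := by
  rw [← Matrix.spectrum_toLin', ← Module.End.hasEigenvalue_iff_mem_spectrum]
  constructor
  · intro h
    obtain ⟨x, hx, hx0⟩ := h.exists_hasEigenvector
    exact ⟨x, hx0, by simpa using Module.End.mem_eigenspace_iff.mp hx⟩
  · rintro ⟨x, hx0, hx⟩
    exact Module.End.hasEigenvalue_of_hasEigenvector
      ⟨Module.End.mem_eigenspace_iff.mpr (by simpa using hx), hx0⟩

theorem Matrix.spectrum_eq_union_of_intertwining {K m k : Type*} [Field K] [Fintype m]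
    [DecidableEq m] [Fintype k] [DecidableEq k] {A : Matrix m m K} {B : Matrix k k K}
    (E : (k → K) →ₗ[K] (m → K)) (C : (m → K) →ₗ[K] (k → K)) (hCE : ∀ y, C (E y) = y)
    (hAE : ∀ y, A *ᵥ E y = E (B *ᵥ y)) (hCA : ∀ z, C (A *ᵥ z) = B *ᵥ C z)
    {c : K} {d : m → K} (hd : d ≠ 0) (hAd : A *ᵥ d = c • d)
    (hker : ∀ z, C z = 0 → ∃ t : K, z = t • d) :
    spectrum K A = spectrum K B ∪ {c} := by
  ext μ
  simp only [Set.mem_union, Set.mem_singleton_iff, mem_spectrum_iff_exists_mulVec_eq_smul_s9]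
  constructor
  · rintro ⟨z, hz, hAz⟩
    by_cases hCz : C z = 0
    · obtain ⟨t, rfl⟩ := hker z hCz
      right
      have ht : t ≠ 0 := by rintro rfl; simp at hz
      rw [mulVec_smul, hAd, smul_comm] at hAz
      exact (smul_left_injective K (smul_ne_zero ht hd) hAz).symm
    · exact Or.inl ⟨C z, hCz, by rw [← hCA, hAz, map_smul]⟩
  · rintro (⟨y, hy, hBy⟩ | rfl)
    · refine ⟨E y, fun h => hy ?_, by rw [hAE, hBy, map_smul]⟩
      rw [← hCE y, h, map_zero]
    · exact ⟨d, hd, hAd⟩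

noncomputable def twinSplit (n : ℕ) : (Fin (n + 1) → ℝ) →ₗ[ℝ] (Fin (n + 2) → ℝ) where
  toFun y := Fin.snoc (Fin.snoc (Fin.init y) (y (Fin.last n) / √2) : Fin (n + 1) → ℝ)
    (y (Fin.last n) / √2)
  map_add' y y' := by
    ext i
    refine Fin.lastCases ?_ (fun i => Fin.lastCases ?_ (fun u => ?_) i) i <;>
      simp [Fin.init, add_div]
  map_smul' c y := by
    ext i
    refine Fin.lastCases ?_ (fun i => Fin.lastCases ?_ (fun u => ?_) i) i <;>
      simp [Fin.init, mul_div_assoc]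

noncomputable def twinMerge (n : ℕ) : (Fin (n + 2) → ℝ) →ₗ[ℝ] (Fin (n + 1) → ℝ) where
  toFun z := Fin.snoc (fun u : Fin n => z u.castSucc.castSucc)
    ((z (Fin.last n).castSucc + z (Fin.last (n + 1))) / √2)
  map_add' z z' := by
    ext i
    refine Fin.lastCases ?_ (fun u => ?_) i <;> simp
    ring
  map_smul' c z := by
    ext i
    refine Fin.lastCases ?_ (fun u => ?_) i <;> simp
    ring

section

variable {n : ℕ}

@[simp] theorem twinSplit_apply_castSucc_castSucc (y : Fin (n + 1) → ℝ) (u : Fin n) :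
    twinSplit n y u.castSucc.castSucc = y u.castSucc := by
  simp [twinSplit, Fin.init]

@[simp] theorem twinSplit_apply_twin (y : Fin (n + 1) → ℝ) :
    twinSplit n y (Fin.last n).castSucc = y (Fin.last n) / √2 := by
  simp [twinSplit]

@[simp] theorem twinSplit_apply_twin' (y : Fin (n + 1) → ℝ) :
    twinSplit n y (Fin.last (n + 1)) = y (Fin.last n) / √2 := by
  simp [twinSplit]

@[simp] theorem twinMerge_apply_castSucc (z : Fin (n + 2) → ℝ) (u : Fin n) :
    twinMerge n z u.castSucc = z u.castSucc.castSucc := by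
  simp [twinMerge]

@[simp] theorem twinMerge_apply_last (z : Fin (n + 2) → ℝ) :
    twinMerge n z (Fin.last n) = (z (Fin.last n).castSucc + z (Fin.last (n + 1))) / √2 := by
  simp [twinMerge]

theorem twinMerge_twinSplit (y : Fin (n + 1) → ℝ) : twinMerge n (twinSplit n y) = y := by
  ext a
  refine Fin.lastCases ?_ (fun u => ?_) a
  · simp only [twinMerge_apply_last, twinSplit_apply_twin, twinSplit_apply_twin']
    rw [← add_div, div_div, Real.mul_self_sqrt zero_le_two]
    ring
  · simp

theorem eq_smul_of_twinMerge_eq_zero {z : Fin (n + 2) → ℝ} (hz : twinMerge n z = 0) :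
    z = z (Fin.last n).castSucc •
      (Pi.single (Fin.last n).castSucc 1 - Pi.single (Fin.last (n + 1)) 1) := by
  have hu (u : Fin n) : z u.castSucc.castSucc = 0 := by
    simpa using congrFun hz u.castSucc
  have hv : z (Fin.last n).castSucc + z (Fin.last (n + 1)) = 0 := by
    simpa using congrFun hz (Fin.last n)
  ext i
  refine Fin.lastCases ?_ (fun i => Fin.lastCases ?_ (fun u => ?_) i) i
  · simpa using eq_neg_of_add_eq_zero_right hv
  · simp
  · simp [hu]

/-- `M` is obtained from `Mstar` by splitting the vertex `Fin.last n` into the true twins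
`(Fin.last n).castSucc` and `Fin.last (n + 1)`, written `twin` and `twin'` in the names below. -/
structure IsTrueTwinDuplication (Mstar : Matrix (Fin (n + 1)) (Fin (n + 1)) ℝ)
    (M : Matrix (Fin (n + 2)) (Fin (n + 2)) ℝ) : Prop where
  isSymm : M.IsSymm
  apply_castSucc_castSucc : ∀ u w : Fin n,
    M u.castSucc.castSucc w.castSucc.castSucc = Mstar u.castSucc w.castSucc
  apply_castSucc_twin : ∀ u : Fin n,
    M u.castSucc.castSucc (Fin.last n).castSucc = Mstar u.castSucc (Fin.last n) / √2
  apply_castSucc_twin' : ∀ u : Fin n,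
    M u.castSucc.castSucc (Fin.last (n + 1)) = Mstar u.castSucc (Fin.last n) / √2
  apply_twin_twin : M (Fin.last n).castSucc (Fin.last n).castSucc = 0
  apply_twin'_twin' : M (Fin.last (n + 1)) (Fin.last (n + 1)) = 0
  apply_twin_twin' :
    M (Fin.last n).castSucc (Fin.last (n + 1)) = Mstar (Fin.last n) (Fin.last n)

namespace IsTrueTwinDuplication

variable {Mstar : Matrix (Fin (n + 1)) (Fin (n + 1)) ℝ}
  {M : Matrix (Fin (n + 2)) (Fin (n + 2)) ℝ}

theorem apply_twin_castSucc (hM : IsTrueTwinDuplication Mstar M) (hMstar : Mstar.IsSymm)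
    (u : Fin n) :
    M (Fin.last n).castSucc u.castSucc.castSucc = Mstar (Fin.last n) u.castSucc / √2 := by
  rw [hM.isSymm.apply, hM.apply_castSucc_twin, hMstar.apply]

theorem apply_twin'_castSucc (hM : IsTrueTwinDuplication Mstar M) (hMstar : Mstar.IsSymm)
    (u : Fin n) :
    M (Fin.last (n + 1)) u.castSucc.castSucc = Mstar (Fin.last n) u.castSucc / √2 := by
  rw [hM.isSymm.apply, hM.apply_castSucc_twin', hMstar.apply]

theorem apply_twin'_twin (hM : IsTrueTwinDuplication Mstar M) :
    M (Fin.last (n + 1)) (Fin.last n).castSucc = Mstar (Fin.last n) (Fin.last n) := by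
  rw [hM.isSymm.apply, hM.apply_twin_twin']

theorem mulVec_twinSplit (hM : IsTrueTwinDuplication Mstar M) (hMstar : Mstar.IsSymm)
    (y : Fin (n + 1) → ℝ) : M *ᵥ twinSplit n y = twinSplit n (Mstar *ᵥ y) := by
  have h2 : (√2)⁻¹ * (√2)⁻¹ = 1 / 2 := by
    rw [← mul_inv, Real.mul_self_sqrt zero_le_two, one_div]
  ext i
  refine Fin.lastCases ?_ (fun i => Fin.lastCases ?_ (fun u => ?_) i) i <;>
    simp only [mulVec, dotProduct, Fin.sum_univ_castSucc, twinSplit_apply_castSucc_castSucc,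
      twinSplit_apply_twin, twinSplit_apply_twin', hM.apply_castSucc_castSucc,
      hM.apply_castSucc_twin, hM.apply_castSucc_twin', hM.apply_twin'_castSucc hMstar,
      hM.apply_twin_castSucc hMstar, hM.apply_twin'_twin,
      hM.apply_twin_twin', hM.apply_twin'_twin', hM.apply_twin_twin, div_mul_eq_mul_div,
      mul_div_assoc', zero_mul, zero_div, add_zero, Finset.sum_div, add_div]
  linear_combination (2 * Mstar u.castSucc (Fin.last n) * y (Fin.last n)) * h2

theorem twinMerge_mulVec (hM : IsTrueTwinDuplication Mstar M) (hMstar : Mstar.IsSymm)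
    (z : Fin (n + 2) → ℝ) : twinMerge n (M *ᵥ z) = Mstar *ᵥ twinMerge n z := by
  have h2 : (√2)⁻¹ * (√2)⁻¹ = 1 / 2 := by
    rw [← mul_inv, Real.mul_self_sqrt zero_le_two, one_div]
  ext a
  refine Fin.lastCases ?_ (fun u => ?_) a <;>
    simp only [mulVec, dotProduct, Fin.sum_univ_castSucc, twinMerge_apply_castSucc,
      twinMerge_apply_last, hM.apply_castSucc_castSucc,
      hM.apply_castSucc_twin, hM.apply_castSucc_twin', hM.apply_twin'_castSucc hMstar,
      hM.apply_twin_castSucc hMstar, hM.apply_twin'_twin,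
      hM.apply_twin_twin', hM.apply_twin'_twin', hM.apply_twin_twin]
  · simp only [div_mul_eq_mul_div, ← Finset.sum_div]
    linear_combination
      (2 * ∑ x : Fin n, Mstar (Fin.last n) x.castSucc * z x.castSucc.castSucc) * h2
  · ring

theorem mulVec_single_sub_single (hM : IsTrueTwinDuplication Mstar M) :
    M *ᵥ (Pi.single (Fin.last n).castSucc 1 - Pi.single (Fin.last (n + 1)) 1) =
      -Mstar (Fin.last n) (Fin.last n) •
        (Pi.single (Fin.last n).castSucc 1 - Pi.single (Fin.last (n + 1)) 1) := by
  ext i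
  refine Fin.lastCases ?_ (fun i => Fin.lastCases ?_ (fun u => ?_) i) i <;>
    simp [mulVec_sub, hM.apply_castSucc_twin, hM.apply_castSucc_twin', hM.apply_twin'_twin,
      hM.apply_twin_twin', hM.apply_twin'_twin', hM.apply_twin_twin]

theorem spectrum_eq (hM : IsTrueTwinDuplication Mstar M) (hMstar : Mstar.IsSymm) :
    spectrum ℝ M = spectrum ℝ Mstar ∪ {-Mstar (Fin.last n) (Fin.last n)} := by
  refine spectrum_eq_union_of_intertwining (twinSplit n) (twinMerge n) twinMerge_twinSplit
    (hM.mulVec_twinSplit hMstar) (hM.twinMerge_mulVec hMstar) (fun h => ?_)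
    hM.mulVec_single_sub_single fun z hz => ⟨_, eq_smul_of_twinMerge_eq_zero hz⟩
  simpa using congrFun h (Fin.last n).castSucc

theorem adj_iff (hM : IsTrueTwinDuplication Mstar M) {G : SimpleGraph (Fin (n + 2))}
    (hadj : G.Adj (Fin.last n).castSucc (Fin.last (n + 1)))
    (htwin : ∀ w, w ≠ (Fin.last n).castSucc → w ≠ Fin.last (n + 1) →
      (G.Adj (Fin.last n).castSucc w ↔ G.Adj (Fin.last (n + 1)) w))
    (hMstarG : ∀ i j : Fin (n + 1), i ≠ j → (Mstar i j ≠ 0 ↔ G.Adj i.castSucc j.castSucc))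
    (hl : Mstar (Fin.last n) (Fin.last n) ≠ 0) {i j : Fin (n + 2)} (hij : i ≠ j) :
    M i j ≠ 0 ↔ G.Adj i j := by
  have hsymm {i j} (h : M i j ≠ 0 ↔ G.Adj i j) : M j i ≠ 0 ↔ G.Adj j i := by
    rwa [hM.isSymm.apply, G.adj_comm]
  have hs2 : √2 ≠ 0 := by positivity
  have hrow (u : Fin n) (j) (hj : u.castSucc.castSucc ≠ j) :
      M u.castSucc.castSucc j ≠ 0 ↔ G.Adj u.castSucc.castSucc j := by
    have hlast := hMstarG _ _ (Fin.castSucc_lt_last u).ne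
    induction j using Fin.lastCases with
    | last =>
      rw [hM.apply_castSucc_twin', div_ne_zero_iff, and_iff_left hs2, hlast, G.adj_comm,
        htwin _ (by simp) (by simp), G.adj_comm]
    | cast j =>
      induction j using Fin.lastCases with
      | last => rw [hM.apply_castSucc_twin, div_ne_zero_iff, and_iff_left hs2, hlast]
      | cast w => rw [hM.apply_castSucc_castSucc, hMstarG _ _ (by simpa using hj)]
  have hpair : M (Fin.last n).castSucc (Fin.last (n + 1)) ≠ 0 ↔
      G.Adj (Fin.last n).castSucc (Fin.last (n + 1)) :=
    iff_of_true (hM.apply_twin_twin' ▸ hl) hadj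
  induction i using Fin.lastCases with
  | last =>
    induction j using Fin.lastCases with
    | last => exact absurd rfl hij
    | cast j =>
      induction j using Fin.lastCases with
      | last => exact hsymm hpair
      | cast u => exact hsymm (hrow u _ (by simp))
  | cast i =>
    induction i using Fin.lastCases with
    | last =>
      induction j using Fin.lastCases with
      | last => exact hpair
      | cast j =>
        induction j using Fin.lastCases with
        | last => exact absurd rfl hij
        | cast u => exact hsymm (hrow u _ (by simp))
    | cast u => exact hrow u j hij

end IsTrueTwinDuplication

end

theorem true_twin_duplication_diag_lambda (n : ℕ) (G : SimpleGraph (Fin (n + 2)))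
    (v v' : Fin (n + 2)) (hv : v = (Fin.last n).castSucc) (hv' : v' = Fin.last (n + 1))
    (htwin : G.Adj v v' ∧ ∀ w, w ≠ v → w ≠ v' → (G.Adj v w ↔ G.Adj v' w))
    (Mstar : Matrix (Fin (n + 1)) (Fin (n + 1)) ℝ) (hMstarSymm : Mstar.IsSymm)
    (hMstarS : ∀ i j : Fin (n + 1), i ≠ j →
      (Mstar i j ≠ 0 ↔ G.Adj i.castSucc j.castSucc))
    (l : ℝ) (hl : l ≠ 0) (hdiag : Mstar (Fin.last n) (Fin.last n) = l)
    (M : Matrix (Fin (n + 2)) (Fin (n + 2)) ℝ) (hMsymm : M.IsSymm)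
    (h1 : ∀ u w : Fin n, M u.castSucc.castSucc w.castSucc.castSucc
      = Mstar u.castSucc w.castSucc)
    (h2 : ∀ u : Fin n, M u.castSucc.castSucc v = Mstar u.castSucc (Fin.last n) / Real.sqrt 2)
    (h3 : ∀ u : Fin n, M u.castSucc.castSucc v' = Mstar u.castSucc (Fin.last n) / Real.sqrt 2)
    (h4 : M v v = 0) (h5 : M v' v' = 0) (h6 : M v v' = l) :
    (∀ i j, i ≠ j → (M i j ≠ 0 ↔ G.Adj i j)) ∧
      spectrum ℝ M = spectrum ℝ Mstar ∪ {-l} := by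
  subst hv hv' hdiag
  have hM : IsTrueTwinDuplication Mstar M := ⟨hMsymm, h1, h2, h3, h4, h5, h6⟩
  exact ⟨fun i j => hM.adj_iff htwin.1 htwin.2 hMstarS hl, hM.spectrum_eq hMstarSymm⟩
end

section
/- Let $M^*$ be a real symmetric $(n-1)\times(n-1)$ matrix with last diagonal entry $0$, and let $M$ be the $n \times n$ symmetric matrix obtained by duplicating the last row/column of $M^*$ with all entries scaled by $1/\sqrt{2}$, and setting the $2\times 2$ bottom-right block to zero. Then the characteristic polynomial of $M$ equals $x$ times the characteristic polynomial of $M^*$. -/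
open Polynomial

/-! Write `M* = [[A, b], [cᵀ, 0]]` and let `M` have the twin border columns `x b, x b` and rows
`y cᵀ, y cᵀ`, where `2 x y = 1` (here `x = y = 1/√2`). Conjugating `M` by `diag(1, S)` with
`S = [[2x, 0], [-1, 1]]` subtracts the first twin row from the second, which makes the last row
zero, and merges the twin columns into the single column `b`. Expanding along that zero row
splits off the factor `X` and leaves the characteristic polynomial of `M*`. -/

namespace Matrix

variable {R n : Type*} [CommRing R] [Fintype n] [DecidableEq n]

def bordered (A : Matrix n n R) (b c : n → R) (k : ℕ) : Matrix (n ⊕ Fin k) (n ⊕ Fin k) R :=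
  fromBlocks A (of fun i _ => b i) (of fun _ j => c j) 0

theorem fromBlocks_mul_bordered_twin_mul {A : Matrix n n R} (b c : n → R) {x y : R}
    (hxy : 2 * x * y = 1) :
    fromBlocks 1 0 0 !![2 * x, 0; -1, 1] * bordered A (fun i => b i * x) (fun j => c j * y) 2 *
        fromBlocks 1 0 0 !![y, 0; y, 1] =
      fromBlocks A (of fun i k => ![b i, b i * x] k) (of fun k j => ![c j, 0] k) 0 := by
  simp only [bordered, fromBlocks_multiply, Matrix.one_mul, Matrix.zero_mul, Matrix.mul_zero,
    Matrix.mul_one, add_zero, zero_add]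
  congr 1
  · ext i k
    have : b i * x * y + b i * x * y = b i := by linear_combination b i * hxy
    fin_cases k <;> simp [mul_apply, Fin.sum_univ_two, this]
  · ext k j
    have : 2 * x * (c j * y) = c j := by linear_combination c j * hxy
    fin_cases k <;> simp [mul_apply, Fin.sum_univ_two, this]

theorem charpoly_fromBlocks_zero_last_row (A : Matrix n n R) (b c w : n → R) :
    (fromBlocks A (of fun i k => ![b i, w i] k) (of fun k j => ![c j, 0] k) 0).charpoly =
      X * (bordered A b c 1).charpoly := by
  let e : n ⊕ Fin 2 ≃ (n ⊕ Fin 1) ⊕ Fin 1 :=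
    ((Equiv.refl n).sumCongr finSumFinEquiv.symm).trans (Equiv.sumAssoc n (Fin 1) (Fin 1)).symm
  have : reindex e e (fromBlocks A (of fun i k => ![b i, w i] k) (of fun k j => ![c j, 0] k) 0)
      = fromBlocks (bordered A b c 1) (of fun i _ => Sum.elim w 0 i) 0 0 := by
    ext (⟨i | i⟩ | i) (⟨j | j⟩ | j) <;> simp [e, bordered, Fin.fin_one_eq_zero] <;> rfl
  rw [← charpoly_reindex e, this, charpoly_fromBlocks_zero₂₁, charpoly_zero, Fintype.card_fin,
    pow_one, mul_comm]

theorem charpoly_bordered_twin {A : Matrix n n R} (b c : n → R) {x y : R} (hxy : 2 * x * y = 1) :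
    (bordered A (fun i => b i * x) (fun j => c j * y) 2).charpoly =
      X * (bordered A b c 1).charpoly := by
  have hQP : fromBlocks 1 0 0 !![y, 0; y, 1] * fromBlocks 1 0 0 !![2 * x, 0; -1, 1] =
      (1 : Matrix (n ⊕ Fin 2) (n ⊕ Fin 2) R) := by
    rw [fromBlocks_multiply, ← fromBlocks_one]
    simp only [Matrix.one_mul, Matrix.zero_mul, Matrix.mul_zero, add_zero, zero_add]
    congr 1
    ext k l
    have hyx : y * (2 * x) = 1 := by linear_combination hxy
    fin_cases k <;> fin_cases l <;> simp [hyx]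
  rw [← charpoly_fromBlocks_zero_last_row A b c (fun i => b i * x),
    ← fromBlocks_mul_bordered_twin_mul b c hxy, charpoly_mul_comm, ← mul_assoc, hQP, Matrix.one_mul]

end Matrix

theorem charpoly_false_twin_diag_zero_general (m : ℕ)
    (A : Matrix (Fin m) (Fin m) ℝ) (b : Fin m → ℝ) :
    (Matrix.fromBlocks A
        (Matrix.of fun i (_ : Fin 2) => b i / Real.sqrt 2)
        (Matrix.of fun (_ : Fin 2) j => b j / Real.sqrt 2)
        (Matrix.of fun (_ : Fin 2) (_ : Fin 2) => (0 : ℝ))).charpoly =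
      X * (Matrix.fromBlocks A
        (Matrix.of fun i (_ : Fin 1) => b i)
        (Matrix.of fun (_ : Fin 1) j => b j)
        (Matrix.of fun (_ : Fin 1) (_ : Fin 1) => (0 : ℝ))).charpoly := by
  have h : 2 * (√2)⁻¹ * (√2)⁻¹ = (1 : ℝ) := by
    rw [mul_assoc, ← mul_inv, Real.mul_self_sqrt zero_le_two, mul_inv_cancel₀ two_ne_zero]
  simp only [div_eq_mul_inv]
  exact Matrix.charpoly_bordered_twin b b h

theorem charpoly_false_twin_diag_zero (m : ℕ)
    (A : Matrix (Fin m) (Fin m) ℝ) (hA : A.IsSymm) (b : Fin m → ℝ) :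
    (Matrix.fromBlocks A
        (Matrix.of fun i (_ : Fin 2) => b i / Real.sqrt 2)
        (Matrix.of fun (_ : Fin 2) j => b j / Real.sqrt 2)
        (Matrix.of fun (_ : Fin 2) (_ : Fin 2) => (0 : ℝ))).charpoly =
      X * (Matrix.fromBlocks A
        (Matrix.of fun i (_ : Fin 1) => b i)
        (Matrix.of fun (_ : Fin 1) j => b j)
        (Matrix.of fun (_ : Fin 1) (_ : Fin 1) => (0 : ℝ))).charpoly :=
  charpoly_false_twin_diag_zero_general m A b
end

section
/- Let $M^* = \begin{pmatrix} A & b \\ b^T & \lambda \end{pmatrix}$ be a real symmetric matrix with $A$ of size $n-2$, $b \in \mathbb{R}^{n-2}$, and $\lambda \in \mathbb{R}$. Then the matrix $M = \begin{pmatrix} A & b/\sqrt{2} & b/\sqrt{2} \\ b^T/\sqrt{2} & 0 & \lambda \\ b^T/\sqrt{2} & \lambda & 0 \end{pmatrix}$ has characteristic polynomial equal to $(x + \lambda)$ times the characteristic polynomial of $M^*$. -/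
/-!
Conjugating by the orthogonal involution `diag(I, H)`, with `H` the normalized `2 × 2` Hadamard
matrix, replaces the twin coordinates `u, v` by `(u + v)/√2` and `(u - v)/√2`. The vector
`e_u - e_v` is an eigenvector with eigenvalue `-λ`, orthogonal to everything else, and on
`e_u + e_v` together with the first `n - 2` coordinates the matrix becomes `M*`.
-/

open Polynomial Matrix

section TwinSplitting

variable {K : Type*} [Field K] {m : Type*} [Fintype m] [DecidableEq m]

def normalizedHadamard (s : K) : Matrix (Fin 2) (Fin 2) K := !![s⁻¹, s⁻¹; s⁻¹, -s⁻¹]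

variable {s : K}

lemma inv_mul_inv_add_inv_mul_inv (hs : s * s = 2) (hs₀ : s ≠ 0) :
    s⁻¹ * s⁻¹ + s⁻¹ * s⁻¹ = 1 := by
  field_simp; linear_combination -hs

lemma normalizedHadamard_mul_self (hs : s * s = 2) (hs₀ : s ≠ 0) :
    normalizedHadamard s * normalizedHadamard s = 1 := by
  ext k k'
  fin_cases k <;> fin_cases k' <;> simp [normalizedHadamard, inv_mul_inv_add_inv_mul_inv hs hs₀]

lemma fromBlocks_twin_eq_conj (A : Matrix m m K) (b : m → K) (l : K) (hs : s * s = 2)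
    (hs₀ : s ≠ 0) :
    fromBlocks A (of fun i (_ : Fin 2) => b i / s) (of fun (_ : Fin 2) j => b j / s)
        (of fun (k k' : Fin 2) => if k = k' then 0 else l) =
      fromBlocks 1 0 0 (normalizedHadamard s) *
        fromBlocks A (of fun i k => ![b i, 0] k) (of fun k j => ![b j, 0] k) (diagonal ![l, -l]) *
        fromBlocks 1 0 0 (normalizedHadamard s) := by
  have h := inv_mul_inv_add_inv_mul_inv hs hs₀
  simp only [fromBlocks_multiply, Matrix.one_mul, Matrix.mul_one, Matrix.zero_mul,
    Matrix.mul_zero, add_zero, zero_add]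
  congr 1 <;> ext i j
  · fin_cases j <;> simp [normalizedHadamard, Matrix.mul_apply, Fin.sum_univ_two, div_eq_mul_inv]
  · fin_cases i <;>
      simp [normalizedHadamard, Matrix.mul_apply, Fin.sum_univ_two, div_eq_mul_inv, mul_comm]
  · fin_cases i <;> fin_cases j <;>
      simp [normalizedHadamard, Matrix.mul_apply, Fin.sum_univ_two, vecMul_diagonal] <;>
      linear_combination -l * h

lemma charpoly_fromBlocks_diagonal_neg (A : Matrix m m K) (b : m → K) (l : K) :
    (fromBlocks A (of fun i k => ![b i, 0] k) (of fun k j => ![b j, 0] k)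
        (diagonal ![l, -l])).charpoly =
      (X + C l) * (fromBlocks A (of fun i (_ : Fin 1) => b i) (of fun (_ : Fin 1) j => b j)
        (of fun (_ : Fin 1) (_ : Fin 1) => l)).charpoly := by
  let e : m ⊕ Fin 2 ≃ (m ⊕ Fin 1) ⊕ Fin 1 :=
    (Equiv.sumCongr (Equiv.refl m) finSumFinEquiv.symm).trans
      (Equiv.sumAssoc m (Fin 1) (Fin 1)).symm
  have hsplit : reindex e e (fromBlocks A (of fun i k => ![b i, 0] k)
      (of fun k j => ![b j, 0] k) (diagonal ![l, -l])) =
      fromBlocks (fromBlocks A (of fun i (_ : Fin 1) => b i) (of fun (_ : Fin 1) j => b j)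
        (of fun (_ : Fin 1) (_ : Fin 1) => l)) 0 0 (of fun _ _ => -l) := by
    ext ((i | i) | i) ((j | j) | j) <;> simp [e, Fin.fin_one_eq_zero] <;> rfl
  rw [← charpoly_reindex e, hsplit, charpoly_fromBlocks_zero₂₁, mul_comm]
  congr
  simp [charpoly]

end TwinSplitting

theorem charpoly_true_twin_off_diag_lambda_general (m : ℕ)
    (A : Matrix (Fin m) (Fin m) ℝ) (b : Fin m → ℝ) (l : ℝ) :
    (Matrix.fromBlocks A
        (Matrix.of fun i (_ : Fin 2) => b i / Real.sqrt 2)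
        (Matrix.of fun (_ : Fin 2) j => b j / Real.sqrt 2)
        (Matrix.of fun (k k' : Fin 2) => if k = k' then (0 : ℝ) else l)).charpoly =
      (X + C l) * (Matrix.fromBlocks A
        (Matrix.of fun i (_ : Fin 1) => b i)
        (Matrix.of fun (_ : Fin 1) j => b j)
        (Matrix.of fun (_ : Fin 1) (_ : Fin 1) => l)).charpoly := by
  have hs : √2 * √2 = 2 := Real.mul_self_sqrt zero_le_two
  have hs₀ : √2 ≠ 0 := by positivity
  set P : Matrix (Fin m ⊕ Fin 2) (Fin m ⊕ Fin 2) ℝ :=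
    fromBlocks 1 0 0 (normalizedHadamard √2)
  have hPP : P * P = 1 := by
    simp [P, fromBlocks_multiply, normalizedHadamard_mul_self hs hs₀, ← fromBlocks_one]
  rw [fromBlocks_twin_eq_conj A b l hs hs₀, charpoly_mul_comm, ← Matrix.mul_assoc, hPP,
    Matrix.one_mul, charpoly_fromBlocks_diagonal_neg]

theorem charpoly_true_twin_off_diag_lambda (m : ℕ)
    (A : Matrix (Fin m) (Fin m) ℝ) (hA : A.IsSymm) (b : Fin m → ℝ) (l : ℝ) :
    (Matrix.fromBlocks A
        (Matrix.of fun i (_ : Fin 2) => b i / Real.sqrt 2)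
        (Matrix.of fun (_ : Fin 2) j => b j / Real.sqrt 2)
        (Matrix.of fun (k k' : Fin 2) => if k = k' then (0 : ℝ) else l)).charpoly =
      (X + C l) * (Matrix.fromBlocks A
        (Matrix.of fun i (_ : Fin 1) => b i)
        (Matrix.of fun (_ : Fin 1) j => b j)
        (Matrix.of fun (_ : Fin 1) (_ : Fin 1) => l)).charpoly :=
  charpoly_true_twin_off_diag_lambda_general m A b l
end

section
/- Let $M^* = \begin{pmatrix} A & b \\ b^T & 0 \end{pmatrix}$ be a real symmetric matrix with $A$ of size $n-2$ and $b \in \mathbb{R}^{n-2}$, and let $\lambda \in \mathbb{R}$. Then the matrix $M = \begin{pmatrix} A & b/\sqrt{2} & b/\sqrt{2} \\ b^T/\sqrt{2} & \lambda & -\lambda \\ b^T/\sqrt{2} & -\lambda & \lambda \end{pmatrix}$ has characteristic polynomial equal to $(x - 2\lambda)$ times the characteristic polynomial of $M^*$. -/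
/-!
Conjugating by the orthogonal involution `H = (1/√2) [[1, 1], [1, -1]]` on the two twin
coordinates replaces them by their sum and difference. The columns `b/√2, b/√2` become `b, 0`
and the twin block `[[λ, -λ], [-λ, λ]]` becomes `diag(0, 2λ)`, so the difference coordinate
splits off as an eigenvector with eigenvalue `2λ` and what remains is exactly `M*`.
-/

open Polynomial Matrix TsirelsonInequality

lemma Matrix.charpoly_mul_mul_of_mul_eq_one {R n : Type*} [CommRing R] [Fintype n]
    [DecidableEq n] {P P' : Matrix n n R} (h : P' * P = 1) (N : Matrix n n R) :
    (P * N * P').charpoly = N.charpoly := by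
  rw [charpoly_mul_comm, ← Matrix.mul_assoc, h, Matrix.one_mul]

lemma Matrix.charpoly_fromBlocks_conj_of_mul_eq_one {R m n : Type*} [CommRing R] [Fintype m]
    [Fintype n] [DecidableEq m] [DecidableEq n] {Q Q' : Matrix n n R} (h : Q' * Q = 1)
    (A : Matrix m m R) (B : Matrix m n R) (C : Matrix n m R) (D : Matrix n n R) :
    (fromBlocks A (B * Q') (Q * C) (Q * D * Q')).charpoly = (fromBlocks A B C D).charpoly := by
  have hP : fromBlocks 1 0 0 Q' * fromBlocks 1 0 0 Q = (1 : Matrix (m ⊕ n) (m ⊕ n) R) := by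
    simp [fromBlocks_multiply, h]
  rw [← charpoly_mul_mul_of_mul_eq_one hP (fromBlocks A B C D)]
  simp [fromBlocks_multiply]

noncomputable def hadamardTwo : Matrix (Fin 2) (Fin 2) ℝ := (√2)⁻¹ • !![1, 1; 1, -1]

lemma hadamardTwo_mul_self : hadamardTwo * hadamardTwo = 1 := by
  ext i j
  fin_cases i <;> fin_cases j <;> simp [hadamardTwo, mul_apply, Fin.sum_univ_two] <;>
    linear_combination 2 * sqrt_two_inv_mul_self

lemma of_div_sqrt_two_mul_hadamardTwo {ι : Type*} (c : ι → ℝ) :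
    (of fun i (_ : Fin 2) => c i / √2) * hadamardTwo = of fun i k => ![c i, 0] k := by
  ext i k
  fin_cases k <;> simp [hadamardTwo, mul_apply, Fin.sum_univ_two, div_eq_mul_inv]
  linear_combination (2 * c i) * sqrt_two_inv_mul_self

lemma hadamardTwo_mul_of_div_sqrt_two {ι : Type*} (c : ι → ℝ) :
    hadamardTwo * (of fun (_ : Fin 2) j => c j / √2) = of fun k j => ![c j, 0] k := by
  ext k j
  fin_cases k <;> simp [hadamardTwo, mul_apply, Fin.sum_univ_two, div_eq_mul_inv]
  linear_combination (2 * c j) * sqrt_two_inv_mul_self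

lemma hadamardTwo_mul_twin_mul_hadamardTwo (l : ℝ) :
    hadamardTwo * (of fun (k k' : Fin 2) => if k = k' then l else -l) * hadamardTwo
      = !![0, 0; 0, 2 * l] := by
  ext i j
  fin_cases i <;> fin_cases j <;>
    simp [hadamardTwo, mul_apply, Fin.sum_univ_two, vecHead, vecTail]
  · ring
  · linear_combination (4 * l) * sqrt_two_inv_mul_self

def sumFinTwoEquiv (ι : Type*) : ι ⊕ Fin 2 ≃ (ι ⊕ Fin 1) ⊕ Fin 1 :=
  (Equiv.sumCongr (Equiv.refl ι) (finSumFinEquiv (m := 1) (n := 1)).symm).trans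
    (Equiv.sumAssoc _ _ _).symm

lemma reindex_sumFinTwoEquiv_fromBlocks {R ι : Type*} [Zero R] [DecidableEq ι]
    (A : Matrix ι ι R) (c : ι → R) (d : R) :
    reindex (sumFinTwoEquiv ι) (sumFinTwoEquiv ι)
      (fromBlocks A (of fun i k => ![c i, 0] k) (of fun k j => ![c j, 0] k) !![0, 0; 0, d]) =
    fromBlocks (fromBlocks A (of fun i (_ : Fin 1) => c i) (of fun (_ : Fin 1) j => c j) 0) 0 0
      (diagonal fun _ => d) := by
  ext i j
  rcases i with (i | i) | i <;> rcases j with (j | j) | j <;>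
    simp [sumFinTwoEquiv, Fin.fin_one_eq_zero] <;> rfl

theorem charpoly_true_twin_diag_lambda_general (m : ℕ)
    (A : Matrix (Fin m) (Fin m) ℝ) (b : Fin m → ℝ) (l : ℝ) :
    (Matrix.fromBlocks A
        (Matrix.of fun i (_ : Fin 2) => b i / Real.sqrt 2)
        (Matrix.of fun (_ : Fin 2) j => b j / Real.sqrt 2)
        (Matrix.of fun (k k' : Fin 2) => if k = k' then l else -l)).charpoly =
      (X - C (2 * l)) * (Matrix.fromBlocks A
        (Matrix.of fun i (_ : Fin 1) => b i)
        (Matrix.of fun (_ : Fin 1) j => b j)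
        (Matrix.of fun (_ : Fin 1) (_ : Fin 1) => (0 : ℝ))).charpoly := by
  rw [← charpoly_fromBlocks_conj_of_mul_eq_one hadamardTwo_mul_self,
    of_div_sqrt_two_mul_hadamardTwo, hadamardTwo_mul_of_div_sqrt_two,
    hadamardTwo_mul_twin_mul_hadamardTwo, ← charpoly_reindex (sumFinTwoEquiv _),
    reindex_sumFinTwoEquiv_fromBlocks, charpoly_fromBlocks_zero₂₁, charpoly_diagonal,
    Fin.prod_univ_one, mul_comm]
  rfl

theorem charpoly_true_twin_diag_lambda (m : ℕ)
    (A : Matrix (Fin m) (Fin m) ℝ) (hA : A.IsSymm) (b : Fin m → ℝ) (l : ℝ) :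
    (Matrix.fromBlocks A
        (Matrix.of fun i (_ : Fin 2) => b i / Real.sqrt 2)
        (Matrix.of fun (_ : Fin 2) j => b j / Real.sqrt 2)
        (Matrix.of fun (k k' : Fin 2) => if k = k' then l else -l)).charpoly =
      (X - C (2 * l)) * (Matrix.fromBlocks A
        (Matrix.of fun i (_ : Fin 1) => b i)
        (Matrix.of fun (_ : Fin 1) j => b j)
        (Matrix.of fun (_ : Fin 1) (_ : Fin 1) => (0 : ℝ))).charpoly :=
  charpoly_true_twin_diag_lambda_general m A b l
end

section
/- If $v$ and $v'$ are distinct vertices of a graph $G$ that are false or true twins, and $G - v'$ is a cograph, then $G$ is a cograph. -/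
namespace SimpleGraph

variable {V W : Type*} {G : SimpleGraph V} {H : SimpleGraph W} {v v' : V}

/-- Only adjacency to vertices outside `{v, v'}` is compared, so for `v ≠ v'` this covers both
false and true twins. -/
def AreTwins (G : SimpleGraph V) (v v' : V) : Prop :=
  ∀ w, w ≠ v → w ≠ v' → (G.Adj v w ↔ G.Adj v' w)

theorem AreTwins.adj_swap_left [DecidableEq V] (h : G.AreTwins v v') {x y : V}
    (hy : y ≠ v) (hy' : y ≠ v') : G.Adj (Equiv.swap v v' x) y ↔ G.Adj x y := by
  rcases eq_or_ne x v with rfl | hx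
  · rw [Equiv.swap_apply_left, h y hy hy']
  rcases eq_or_ne x v' with rfl | hx'
  · rw [Equiv.swap_apply_right, h y hy hy']
  · rw [Equiv.swap_apply_of_ne_of_ne hx hx']

def AreTwins.swapIso [DecidableEq V] (h : G.AreTwins v v') : G ≃g G where
  toEquiv := Equiv.swap v v'
  map_rel_iff' {x y} := by
    change G.Adj (Equiv.swap v v' x) (Equiv.swap v v' y) ↔ G.Adj x y
    by_cases hy : y ≠ v ∧ y ≠ v'
    · rw [Equiv.swap_apply_of_ne_of_ne hy.1 hy.2, h.adj_swap_left hy.1 hy.2]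
    by_cases hx : x ≠ v ∧ x ≠ v'
    · rw [Equiv.swap_apply_of_ne_of_ne hx.1 hx.2, adj_comm, h.adj_swap_left hx.1 hx.2, adj_comm]
    have hx : x = v ∨ x = v' := by tauto
    have hy : y = v ∨ y = v' := by tauto
    rcases hx with rfl | rfl <;> rcases hy with rfl | rfl <;> simp [adj_comm]

theorem AreTwins.of_embedding (f : H ↪g G) {a b : W} (h : G.AreTwins (f a) (f b)) :
    H.AreTwins a b := fun w hwa hwb => by
  simpa only [f.map_adj_iff] using h (f w) (f.injective.ne hwa) (f.injective.ne hwb)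

theorem pathGraph_four_not_areTwins (a b : Fin 4) (hab : a ≠ b) :
    ¬ (pathGraph 4).AreTwins a b := by
  unfold AreTwins
  simp only [pathGraph_adj]
  revert a b
  decide

theorem AreTwins.exists_embedding_not_mem_range (h : G.AreTwins v v') (hne : v ≠ v')
    (hH : ∀ a b, a ≠ b → ¬ H.AreTwins a b) (f : H ↪g G) :
    ∃ g : H ↪g G, v' ∉ Set.range g := by
  classical
  by_cases hv' : v' ∈ Set.range f
  swap
  · exact ⟨f, hv'⟩
  obtain ⟨b, rfl⟩ := hv'
  have hv : v ∉ Set.range f := by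
    rintro ⟨a, rfl⟩
    exact hH a b (f.injective.ne_iff.mp hne) (h.of_embedding f)
  refine ⟨h.swapIso.toEmbedding.comp f, ?_⟩
  rintro ⟨x, hx⟩
  refine hv ⟨x, ?_⟩
  simpa [AreTwins.swapIso, Equiv.swap_apply_eq_iff] using hx

theorem Embedding.nonempty_induce_of_range_subset (f : H ↪g G) {s : Set V}
    (hs : Set.range f ⊆ s) : Nonempty (H ↪g G.induce s) :=
  ⟨(G.induceHomOfLE hs).comp f.isoInduceRange.toEmbedding⟩

end SimpleGraph

theorem cograph_of_twin_deletion {V : Type*} (G : SimpleGraph V) (v v' : V) (hne : v ≠ v')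
    (htwin : (¬ G.Adj v v' ∧ ∀ w, G.Adj v w ↔ G.Adj v' w) ∨
      (G.Adj v v' ∧ ∀ w, w ≠ v → w ≠ v' → (G.Adj v w ↔ G.Adj v' w)))
    (hdel : IsCograph (G.induce {w | w ≠ v'})) :
    IsCograph G := by
  have hvv' : G.AreTwins v v' := htwin.elim (fun h w _ _ => h.2 w) And.right
  refine ⟨fun f => ?_⟩
  obtain ⟨g, hg⟩ := hvv'.exists_embedding_not_mem_range hne SimpleGraph.pathGraph_four_not_areTwins f
  obtain ⟨e⟩ := g.nonempty_induce_of_range_subset (s := {w | w ≠ v'}) fun _ hw h => hg (h ▸ hw)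
  exact hdel.false e
end
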